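/- arXiv:1308.3763 — 13 statements merged into one kernel-verified Lean document; each statement's English description precedes it below -/
import Mathlib

section
/- Let G and H be simple games on disjoint player sets, let g ∈ P_G, and suppose the empty coalition is losing in H. Then the minimal winning coalitions of G∘_g H are exactly the following: (a) the minimal winning coalitions X of G with g ∉ X, and (b) the coalitions X ∪ Y where X ⊆ P_G∖{g}, X∪{g} is a minimal winning coalition of G, and Y is a minimal winning coalition of H. -/
open scoped Classical

/-- A simple game: a finite nonempty set of players together with a
nonempty, superset-closed collection of winning coalitions, all of which
are subsets of the player set. -/
structure SimpleGame (α : Type) where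
  players : Finset α
  players_nonempty : players.Nonempty
  winning : Finset α → Prop
  winning_subset : ∀ X, winning X → X ⊆ players
  winning_nonempty : ∃ X, winning X
  winning_mono : ∀ ⦃X Y : Finset α⦄, winning X → X ⊆ Y → Y ⊆ players → winning Y

namespace SimpleGame

variable {α : Type}

/-- A minimal winning coalition: winning, and all proper subsets are losing. -/
def MinWinning (G : SimpleGame α) (X : Finset α) : Prop :=
  G.winning X ∧ ∀ Y ⊂ X, ¬ G.winning Y

/-- A dummy: a player belonging to no minimal winning coalition. -/
def IsDummy (G : SimpleGame α) (p : α) : Prop :=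
  ∀ X, G.MinWinning X → p ∉ X

/-- A passer: a player winning on its own. -/
def IsPasser (G : SimpleGame α) (p : α) : Prop := G.winning {p}

/-- A vetoer: a player belonging to every winning coalition. -/
def IsVetoer (G : SimpleGame α) (p : α) : Prop := ∀ X, G.winning X → p ∈ X

/-- Isbell's desirability relation: `i ⪰ j`. -/
def Geq (G : SimpleGame α) (i j : α) : Prop :=
  ∀ X ⊆ G.players, i ∉ X → j ∉ X → G.winning (insert j X) → G.winning (insert i X)

/-- Strict desirability: `i ≻ j`. -/
def Gt (G : SimpleGame α) (i j : α) : Prop := G.Geq i j ∧ ¬ G.Geq j i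

/-- A complete game: the desirability relation is total on players. -/
def Complete (G : SimpleGame α) : Prop :=
  ∀ i ∈ G.players, ∀ j ∈ G.players, G.Geq i j ∨ G.Geq j i

/-- A weighted game: there are nonnegative real weights and a real quota such
that a coalition is winning iff its total weight meets the quota. -/
def Weighted (G : SimpleGame α) : Prop :=
  ∃ (w : α → ℝ) (q : ℝ), (∀ i, 0 ≤ w i) ∧
    ∀ X ⊆ G.players, (G.winning X ↔ q ≤ ∑ i ∈ X, w i)

/-- `IsComposition C G H g` says that `C` is the composition `G ∘_g H`:
its player set is `(P_G \ {g}) ∪ P_H` and a coalition `X` of `C` is winning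
iff `X ∩ P_G` is winning in `G`, or `(X ∩ P_G) ∪ {g}` is winning in `G` and
`X ∩ P_H` is winning in `H`. -/
def IsComposition (C G H : SimpleGame α) (g : α) : Prop :=
  C.players = (G.players \ {g}) ∪ H.players ∧
  ∀ X ⊆ C.players,
    (C.winning X ↔ (G.winning (X ∩ G.players) ∨
      (G.winning (insert g (X ∩ G.players)) ∧ H.winning (X ∩ H.players))))

/-- `G` is the `k`-out-of-`n` game `H_{n,k}`: it has `n` players and a
coalition is winning iff it has at least `k` players. -/
def IsKOutOfN (G : SimpleGame α) (n k : ℕ) : Prop :=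
  G.players.card = n ∧ ∀ X ⊆ G.players, (G.winning X ↔ k ≤ X.card)

/-- Isomorphism of simple games: a bijection between the player sets mapping
winning coalitions exactly onto winning coalitions. -/
def Isomorphic {β : Type} (G : SimpleGame α) (G' : SimpleGame β) : Prop :=
  ∃ σ : α → β, Set.InjOn σ ↑G.players ∧ G.players.image σ = G'.players ∧
    ∀ X ⊆ G.players, (G.winning X ↔ G'.winning (X.image σ))

/-- A decomposable game: one isomorphic to a composition `H ∘_h K` where both
`H` and `K` have at least two players. -/
def Decomposable (G : SimpleGame α) : Prop :=
  ∃ (β : Type) (H K C : SimpleGame β) (h : β),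
    Disjoint H.players K.players ∧ h ∈ H.players ∧
    2 ≤ H.players.card ∧ 2 ≤ K.players.card ∧
    IsComposition C H K h ∧ Isomorphic G C

/-- `(X1, X2; Y1, Y2)` is a trading transform: every player belongs to exactly
as many of `X1, X2` (with multiplicity) as of `Y1, Y2`. -/
def IsTradingTransform2 (X1 X2 Y1 Y2 : Finset α) : Prop :=
  ∀ a : α, ((if a ∈ X1 then 1 else 0) + (if a ∈ X2 then 1 else 0) : ℕ)
    = (if a ∈ Y1 then 1 else 0) + (if a ∈ Y2 then 1 else 0)

end SimpleGame

open SimpleGame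
/-- description of the minimal winning coalitions of a composition
`G ∘_g H`, assuming the empty coalition is losing in `H`. -/
theorem statement1 {α : Type} (G H C : SimpleGame α) (g : α)
    (hdisj : Disjoint G.players H.players) (hg : g ∈ G.players)
    (hempty : ¬ H.winning ∅)
    (hC : SimpleGame.IsComposition C G H g) :
    ∀ X : Finset α,
      C.MinWinning X ↔
        ((G.MinWinning X ∧ g ∉ X) ∨
          ∃ Y Z : Finset α, X = Y ∪ Z ∧ Y ⊆ G.players \ {g} ∧
            G.MinWinning (insert g Y) ∧ H.MinWinning Z) := by
  obtain ⟨hCp, hCw⟩ := hC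
  have hdisj' := Finset.disjoint_left.mp hdisj
  have hgC : g ∉ C.players := by
    rw [hCp, Finset.mem_union]
    rintro (h | h)
    · exact (Finset.mem_sdiff.mp h).2 (Finset.mem_singleton_self g)
    · exact hdisj' hg h
  intro X
  constructor
  · rintro ⟨hXw, hXmin⟩
    have hXC : X ⊆ C.players := C.winning_subset X hXw
    have hgX : g ∉ X := fun h => hgC (hXC h)
    by_cases hA : G.winning (X ∩ G.players)
    · -- case A : X ∩ G.players is winning in G
      have hXG : X ∩ G.players ⊆ C.players := Finset.inter_subset_left.trans hXC
      have hwin : C.winning (X ∩ G.players) := by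
        rw [hCw _ hXG]
        left
        rwa [Finset.inter_assoc, Finset.inter_self]
      have heq : X ∩ G.players = X := by
        by_contra hne
        exact hXmin _ (Finset.ssubset_iff_subset_ne.mpr ⟨Finset.inter_subset_left, hne⟩) hwin
      have hXsub : X ⊆ G.players := Finset.inter_eq_left.mp heq
      left
      refine ⟨⟨heq ▸ hA, ?_⟩, hgX⟩
      intro Y hY hYw
      have hYG : Y ⊆ G.players := G.winning_subset Y hYw
      have hYC : Y ⊆ C.players := hY.subset.trans hXC
      refine hXmin Y hY ?_
      rw [hCw _ hYC]
      left
      rwa [Finset.inter_eq_left.mpr hYG]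
    · -- case B
      obtain ⟨hB1, hB2⟩ := ((hCw X hXC).mp hXw).resolve_left hA
      have hYsub : X ∩ G.players ⊆ G.players := Finset.inter_subset_right
      have hZsub : X ∩ H.players ⊆ H.players := Finset.inter_subset_right
      have hXGH : ∀ a ∈ X, a ∈ G.players ∨ a ∈ H.players := by
        intro a ha
        have := hXC ha
        rw [hCp] at this
        simp only [Finset.mem_union, Finset.mem_sdiff, Finset.mem_singleton] at this
        tauto
      have hXeq : X = (X ∩ G.players) ∪ (X ∩ H.players) := by
        ext a
        simp only [Finset.mem_union, Finset.mem_inter]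
        constructor
        · intro ha; rcases hXGH a ha with h | h
          · exact Or.inl ⟨ha, h⟩
          · exact Or.inr ⟨ha, h⟩
        · rintro (⟨h, _⟩ | ⟨h, _⟩) <;> exact h
      refine Or.inr ⟨X ∩ G.players, X ∩ H.players, hXeq, ?_, ⟨hB1, ?_⟩, hB2, ?_⟩
      · intro a ha
        rw [Finset.mem_sdiff, Finset.mem_singleton]
        exact ⟨(Finset.mem_inter.mp ha).2, fun h => hgX (h ▸ (Finset.mem_inter.mp ha).1)⟩
      · -- minimality of insert g (X ∩ G.players)
        intro W hW hWw
        by_cases hgW : g ∈ W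
        · -- consider V = (W.erase g) ∪ (X ∩ H.players)
          set W' := W.erase g with hW'def
          have hW'Y : W' ⊆ X ∩ G.players := by
            intro a ha
            have haW : a ∈ W := Finset.mem_of_mem_erase ha
            have hag : a ≠ g := Finset.ne_of_mem_erase ha
            have := hW.subset haW
            rcases Finset.mem_insert.mp this with h | h
            · exact absurd h hag
            · exact h
          have hW'G : W' ⊆ G.players := hW'Y.trans hYsub
          set V := W' ∪ (X ∩ H.players) with hVdef
          have hVG : V ∩ G.players = W' := by
            rw [hVdef, Finset.union_inter_distrib_right,
              Finset.inter_eq_left.mpr hW'G]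
            have : (X ∩ H.players) ∩ G.players = ∅ := by
              apply Finset.eq_empty_of_forall_notMem
              intro a ha
              simp only [Finset.mem_inter] at ha
              exact hdisj' ha.2 ha.1.2
            rw [this, Finset.union_empty]
          have hVH : V ∩ H.players = X ∩ H.players := by
            rw [hVdef, Finset.union_inter_distrib_right,
              Finset.inter_eq_left.mpr hZsub]
            have : W' ∩ H.players = ∅ := by
              apply Finset.eq_empty_of_forall_notMem
              intro a ha
              simp only [Finset.mem_inter] at ha
              exact hdisj' (hW'G ha.1) ha.2
            rw [this, Finset.empty_union]
          have hVX : V ⊆ X := Finset.union_subset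
            (hW'Y.trans Finset.inter_subset_left) Finset.inter_subset_left
          have hVC : V ⊆ C.players := hVX.trans hXC
          have hVwin : C.winning V := by
            rw [hCw _ hVC]
            right
            rw [hVG, hVH]
            refine ⟨?_, hB2⟩
            rw [← Finset.insert_erase hgW] at hWw
            exact hWw
          -- V is a proper subset of X
          obtain ⟨a, haIn, haOut⟩ := Finset.exists_of_ssubset hW
          have hag : a ≠ g := fun h => haOut (h ▸ hgW)
          have haY : a ∈ X ∩ G.players := by
            rcases Finset.mem_insert.mp haIn with h | h
            · exact absurd h hag
            · exact h
          have haV : a ∉ V := by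
            rw [hVdef, Finset.mem_union]
            rintro (h | h)
            · exact haOut (Finset.mem_of_mem_erase h)
            · exact hdisj' ((Finset.mem_inter.mp haY).2) ((Finset.mem_inter.mp h).2)
          exact absurd hVwin (hXmin V (by
            refine Finset.ssubset_iff_of_subset hVX |>.mpr ⟨a, ?_, haV⟩
            exact (Finset.mem_inter.mp haY).1))
        · -- g ∉ W : W ⊆ X ∩ G.players, so X ∩ G.players would be winning
          have hWY : W ⊆ X ∩ G.players := by
            intro a ha
            rcases Finset.mem_insert.mp (hW.subset ha) with h | h
            · exact absurd (h ▸ ha) hgW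
            · exact h
          exact hA (G.winning_mono hWw hWY hYsub)
      · -- minimality of X ∩ H.players
        intro W hW hWw
        set V := (X ∩ G.players) ∪ W with hVdef
        have hWH : W ⊆ H.players := H.winning_subset W hWw
        have hVG : V ∩ G.players = X ∩ G.players := by
          rw [hVdef, Finset.union_inter_distrib_right,
            Finset.inter_eq_left.mpr hYsub]
          have : W ∩ G.players = ∅ := by
            apply Finset.eq_empty_of_forall_notMem
            intro a ha
            simp only [Finset.mem_inter] at ha
            exact hdisj' ha.2 (hWH ha.1)
          rw [this, Finset.union_empty]
        have hVH : V ∩ H.players = W := by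
          rw [hVdef, Finset.union_inter_distrib_right,
            Finset.inter_eq_left.mpr hWH]
          have : (X ∩ G.players) ∩ H.players = ∅ := by
            apply Finset.eq_empty_of_forall_notMem
            intro a ha
            simp only [Finset.mem_inter] at ha
            exact hdisj' ha.1.2 ha.2
          rw [this, Finset.empty_union]
        have hVX : V ⊆ X := Finset.union_subset Finset.inter_subset_left
          (hW.subset.trans Finset.inter_subset_left)
        have hVC : V ⊆ C.players := hVX.trans hXC
        have hVwin : C.winning V := by
          rw [hCw _ hVC]
          right
          rw [hVG, hVH]
          exact ⟨hB1, hWw⟩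
        obtain ⟨a, haIn, haOut⟩ := Finset.exists_of_ssubset hW
        have haV : a ∉ V := by
          rw [hVdef, Finset.mem_union]
          rintro (h | h)
          · exact hdisj' (Finset.mem_inter.mp h).2 (Finset.mem_inter.mp haIn).2
          · exact haOut h
        exact absurd hVwin (hXmin V ((Finset.ssubset_iff_of_subset hVX).mpr
          ⟨a, Finset.inter_subset_left haIn, haV⟩))
  · rintro (⟨⟨hXw, hXmin⟩, hgX⟩ | ⟨Y, Z, rfl, hYsub, ⟨hgYw, hgYmin⟩, hZw, hZmin⟩)
    · -- left case: minimal winning in G avoiding g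
      have hXG : X ⊆ G.players := G.winning_subset X hXw
      have hXC : X ⊆ C.players := by
        intro a ha
        rw [hCp, Finset.mem_union, Finset.mem_sdiff, Finset.mem_singleton]
        exact Or.inl ⟨hXG ha, fun h => hgX (h ▸ ha)⟩
      refine ⟨?_, ?_⟩
      · rw [hCw _ hXC]
        left
        rwa [Finset.inter_eq_left.mpr hXG]
      · intro W hW hWc
        have hWC : W ⊆ C.players := hW.subset.trans hXC
        have hWG : W ⊆ G.players := hW.subset.trans hXG
        rcases (hCw W hWC).mp hWc with h | ⟨_, h⟩
        · rw [Finset.inter_eq_left.mpr hWG] at h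
          exact hXmin W hW h
        · have : W ∩ H.players = ∅ := by
            apply Finset.eq_empty_of_forall_notMem
            intro a ha
            simp only [Finset.mem_inter] at ha
            exact hdisj' (hWG ha.1) ha.2
          rw [this] at h
          exact hempty h
    · -- right case: (Y ∪ Z)
      have hYG : Y ⊆ G.players := fun a ha => (Finset.mem_sdiff.mp (hYsub ha)).1
      have hgY : g ∉ Y := fun h => (Finset.mem_sdiff.mp (hYsub h)).2 (Finset.mem_singleton_self g)
      have hZH : Z ⊆ H.players := H.winning_subset Z hZw
      have hXC : Y ∪ Z ⊆ C.players := by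
        rw [hCp]
        exact Finset.union_subset (hYsub.trans Finset.subset_union_left)
          (hZH.trans Finset.subset_union_right)
      have hXG : (Y ∪ Z) ∩ G.players = Y := by
        rw [Finset.union_inter_distrib_right, Finset.inter_eq_left.mpr hYG]
        have : Z ∩ G.players = ∅ := by
          apply Finset.eq_empty_of_forall_notMem
          intro a ha
          simp only [Finset.mem_inter] at ha
          exact hdisj' ha.2 (hZH ha.1)
        rw [this, Finset.union_empty]
      have hXH : (Y ∪ Z) ∩ H.players = Z := by
        rw [Finset.union_inter_distrib_right, Finset.inter_eq_left.mpr hZH]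
        have : Y ∩ H.players = ∅ := by
          apply Finset.eq_empty_of_forall_notMem
          intro a ha
          simp only [Finset.mem_inter] at ha
          exact hdisj' (hYG ha.1) ha.2
        rw [this, Finset.empty_union]
      refine ⟨?_, ?_⟩
      · rw [hCw _ hXC]
        right
        rw [hXG, hXH]
        exact ⟨hgYw, hZw⟩
      · intro W hW hWc
        have hWC : W ⊆ C.players := hW.subset.trans hXC
        have hgW : g ∉ W := fun h => hgC (hWC h)
        have hWGY : W ∩ G.players ⊆ Y := by
          intro a ha
          have : a ∈ (Y ∪ Z) ∩ G.players :=
            Finset.mem_inter.mpr ⟨hW.subset (Finset.mem_inter.mp ha).1,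
              (Finset.mem_inter.mp ha).2⟩
          rwa [hXG] at this
        have hWHZ : W ∩ H.players ⊆ Z := by
          intro a ha
          have : a ∈ (Y ∪ Z) ∩ H.players :=
            Finset.mem_inter.mpr ⟨hW.subset (Finset.mem_inter.mp ha).1,
              (Finset.mem_inter.mp ha).2⟩
          rwa [hXH] at this
        rcases (hCw W hWC).mp hWc with h | ⟨h1, h2⟩
        · exact hgYmin _ (lt_of_le_of_lt hWGY (Finset.ssubset_insert hgY)) h
        · by_cases hZeq : W ∩ H.players = Z
          · -- then W ∩ G.players must be a proper subset of Y
            have hWGss : W ∩ G.players ⊂ Y := by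
              refine Finset.ssubset_iff_subset_ne.mpr ⟨hWGY, fun heq => ?_⟩
              apply hW.ne
              apply Finset.Subset.antisymm hW.subset
              intro a ha
              rcases Finset.mem_union.mp ha with h | h
              · have h' : a ∈ W ∩ G.players := by rw [heq]; exact h
                exact (Finset.mem_inter.mp h').1
              · have h' : a ∈ W ∩ H.players := by rw [hZeq]; exact h
                exact (Finset.mem_inter.mp h').1
            refine absurd h1 (hgYmin _ ?_)
            obtain ⟨a, haY, haW⟩ := Finset.exists_of_ssubset hWGss
            refine Finset.ssubset_iff_of_subset
              (Finset.insert_subset_insert g hWGss.subset) |>.mpr ⟨a, ?_, ?_⟩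
            · exact Finset.mem_insert_of_mem haY
            · rw [Finset.mem_insert]
              rintro (h | h)
              · exact hgY (h ▸ haY)
              · exact haW h
          · exact absurd h2 (hZmin _ (Finset.ssubset_iff_subset_ne.mpr ⟨hWHZ, hZeq⟩))
end

section
/- Let G and H be simple games on disjoint nonempty player sets and let g ∈ P_G. Then G∘_g H has no dummies if and only if G has no dummies and H has no dummies. -/
open scoped Classical

open SimpleGame

private lemma exists_minWin {α : Type} (G : SimpleGame α) :
    ∀ W : Finset α, G.winning W → ∃ M, M ⊆ W ∧ G.MinWinning M := by
  intro W
  induction W using Finset.strongInduction with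
  | _ W ih =>
    intro hW
    by_cases h : ∀ Y ⊂ W, ¬ G.winning Y
    · exact ⟨W, Finset.Subset.refl W, hW, h⟩
    · push_neg at h
      obtain ⟨Y, hYW, hY⟩ := h
      obtain ⟨M, hMY, hM⟩ := ih Y hYW hY
      exact ⟨M, hMY.trans hYW.subset, hM⟩

private lemma not_dummy_iff {α : Type} (G : SimpleGame α) (p : α) :
    ¬ G.IsDummy p ↔ ∃ X, G.MinWinning X ∧ p ∈ X := by
  unfold SimpleGame.IsDummy
  push_neg
  rfl

private lemma union_inter_left' {α : Type} [DecidableEq α] {A B P : Finset α}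
    (hA : A ⊆ P) (hB : Disjoint B P) : (A ∪ B) ∩ P = A := by
  rw [Finset.union_inter_distrib_right, Finset.inter_eq_left.mpr hA,
    Finset.disjoint_iff_inter_eq_empty.mp hB, Finset.union_empty]

private lemma union_inter_right' {α : Type} [DecidableEq α] {A B P : Finset α}
    (hA : Disjoint A P) (hB : B ⊆ P) : (A ∪ B) ∩ P = B := by
  rw [Finset.union_inter_distrib_right, Finset.inter_eq_left.mpr hB,
    Finset.disjoint_iff_inter_eq_empty.mp hA, Finset.empty_union]

/-- `G ∘_g H` has no dummies iff both `G` and `H` have no dummies. -/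
theorem statement3 {α : Type} (G H C : SimpleGame α) (g : α)
    (hdisj : Disjoint G.players H.players) (hg : g ∈ G.players)
    (hC : SimpleGame.IsComposition C G H g) :
    (∀ p ∈ C.players, ¬ C.IsDummy p) ↔
      ((∀ p ∈ G.players, ¬ G.IsDummy p) ∧ (∀ p ∈ H.players, ¬ H.IsDummy p)) := by
  obtain ⟨hCP, hCW⟩ := hC
  have hgH : g ∉ H.players := Finset.disjoint_left.mp hdisj hg
  have hgC : g ∉ C.players := by
    rw [hCP]; simp [hgH]
  -- key construction: composite minimal winning coalitions
  have key : ∀ M N : Finset α, G.MinWinning M → g ∈ M → H.MinWinning N →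
      C.MinWinning ((M \ {g}) ∪ N) := by
    rintro M N ⟨hM1, hM2⟩ hgM ⟨hN1, hN2⟩
    have hMG : M ⊆ G.players := G.winning_subset M hM1
    have hNH : N ⊆ H.players := H.winning_subset N hN1
    have hXC : (M \ {g}) ∪ N ⊆ C.players := by
      rw [hCP]
      exact Finset.union_subset_union (Finset.sdiff_subset_sdiff hMG (Finset.Subset.refl _))
        hNH
    have hNG : Disjoint N G.players := (hdisj.symm).mono_left hNH
    have hMH : Disjoint (M \ {g}) H.players :=
      hdisj.mono_left ((Finset.sdiff_subset).trans hMG)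
    have hXG : ((M \ {g}) ∪ N) ∩ G.players = M \ {g} :=
      union_inter_left' ((Finset.sdiff_subset).trans hMG) hNG
    have hXH : ((M \ {g}) ∪ N) ∩ H.players = N := union_inter_right' hMH hNH
    have hins : insert g (M \ {g}) = M := by
      rw [Finset.sdiff_singleton_eq_erase, Finset.insert_erase hgM]
    have hMg : M \ {g} ⊂ M :=
      Finset.sdiff_ssubset (Finset.singleton_subset_iff.mpr hgM) (Finset.singleton_nonempty g)
    constructor
    · exact (hCW _ hXC).mpr (Or.inr ⟨by rw [hXG, hins]; exact hM1, by rw [hXH]; exact hN1⟩)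
    · intro Y hY hYw
      have hYC : Y ⊆ C.players := hY.subset.trans hXC
      have hYG : Y ∩ G.players ⊆ M \ {g} := by
        rw [← hXG]; exact Finset.inter_subset_inter hY.subset (Finset.Subset.refl _)
      have hYH : Y ∩ H.players ⊆ N := by
        rw [← hXH]; exact Finset.inter_subset_inter hY.subset (Finset.Subset.refl _)
      rcases (hCW Y hYC).mp hYw with h1 | ⟨h2, h3⟩
      · exact hM2 _ (lt_of_le_of_lt hYG hMg) h1
      · rcases eq_or_lt_of_le hYH with heq | hlt
        · -- Y ∩ H = N, so Y ∩ G must be a proper subset of M \ {g}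
          have hYGs : Y ∩ G.players ⊂ M \ {g} := by
            rcases eq_or_lt_of_le hYG with heq2 | h
            · exfalso
              have : (M \ {g}) ∪ N ⊆ Y := by
                rw [← heq2, ← heq]
                exact Finset.union_subset Finset.inter_subset_left Finset.inter_subset_left
              exact (hY.not_subset) this
            · exact h
          have : insert g (Y ∩ G.players) ⊂ M := by
            obtain ⟨x, hxM, hxY⟩ := Finset.exists_of_ssubset hYGs
            refine Finset.ssubset_iff_of_subset ?_ |>.mpr ⟨x, (Finset.mem_sdiff.mp hxM).1, ?_⟩
            · exact Finset.insert_subset hgM (hYGs.subset.trans hMg.subset)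
            · intro hx
              rcases Finset.mem_insert.mp hx with rfl | hx'
              · exact (Finset.mem_sdiff.mp hxM).2 (Finset.mem_singleton_self _)
              · exact hxY hx'
          exact hM2 _ this h2
        · exact hN2 _ hlt h3
  -- going from empty winning in H to all of H being dummies
  constructor
  · -- forward direction
    intro hnd
    -- decomposition facts for a minimal winning coalition of C
    have decompA : ∀ X, C.MinWinning X → G.winning (X ∩ G.players) →
        X ⊆ G.players ∧ G.MinWinning X := by
      rintro X ⟨hX1, hX2⟩ hA
      have hXC : X ⊆ C.players := C.winning_subset X hX1
      have hXGC : X ∩ G.players ⊆ C.players := Finset.inter_subset_left.trans hXC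
      have hXGw : C.winning (X ∩ G.players) := by
        refine (hCW _ hXGC).mpr (Or.inl ?_)
        rw [Finset.inter_assoc, Finset.inter_self]
        exact hA
      have hXeq : X ∩ G.players = X := by
        by_contra hne
        exact hX2 _ (lt_of_le_of_ne Finset.inter_subset_left hne) hXGw
      have hXsub : X ⊆ G.players := by rw [← hXeq]; exact Finset.inter_subset_right
      refine ⟨hXsub, by rw [← hXeq]; exact hA, ?_⟩
      intro Z hZ hZw
      have hZC : Z ⊆ C.players := hZ.subset.trans hXC
      have hZG : Z ∩ G.players = Z := Finset.inter_eq_left.mpr (hZ.subset.trans hXsub)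
      exact hX2 Z hZ ((hCW Z hZC).mpr (Or.inl (by rw [hZG]; exact hZw)))
    have decompB : ∀ X, C.MinWinning X → ¬ G.winning (X ∩ G.players) →
        G.winning (insert g (X ∩ G.players)) ∧ H.winning (X ∩ H.players) →
        G.MinWinning (insert g (X ∩ G.players)) ∧ H.MinWinning (X ∩ H.players) := by
      rintro X ⟨hX1, hX2⟩ hA ⟨hB1, hB2⟩
      have hXC : X ⊆ C.players := C.winning_subset X hX1
      have hXGP : X ∩ G.players ⊆ G.players := Finset.inter_subset_right
      have hXHP : X ∩ H.players ⊆ H.players := Finset.inter_subset_right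
      have hdG : Disjoint (X ∩ G.players) H.players := hdisj.mono_left hXGP
      have hdH : Disjoint (X ∩ H.players) G.players := (hdisj.symm).mono_left hXHP
      have hgX : g ∉ X := fun h => hgC (hXC h)
      constructor
      · refine ⟨hB1, ?_⟩
        intro Z hZ hZw
        by_cases hgZ : g ∈ Z
        · -- replace the G-part of X by Z \ {g}
          set Y := (Z \ {g}) ∪ (X ∩ H.players) with hYdef
          have hZG : Z \ {g} ⊆ X ∩ G.players := by
            intro a ha
            obtain ⟨haZ, hag⟩ := Finset.mem_sdiff.mp ha
            rcases Finset.mem_insert.mp (hZ.subset haZ) with rfl | h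
            · exact absurd (Finset.mem_singleton_self a) hag
            · exact h
          have hYX : Y ⊆ X :=
            Finset.union_subset (hZG.trans Finset.inter_subset_left) Finset.inter_subset_left
          have hYss : Y ⊂ X := by
            have hZGs : Z \ {g} ⊂ X ∩ G.players := by
              refine lt_of_le_of_ne hZG ?_
              intro heq
              have : Z ⊆ insert g (X ∩ G.players) := hZ.subset
              have hsup : insert g (X ∩ G.players) ⊆ Z := by
                rw [← heq]
                intro a ha
                rcases Finset.mem_insert.mp ha with rfl | h
                · exact hgZ
                · exact (Finset.mem_sdiff.mp h).1
              exact hZ.not_subset hsup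
            obtain ⟨x, hxXG, hxZ⟩ := Finset.exists_of_ssubset hZGs
            refine Finset.ssubset_iff_of_subset hYX |>.mpr
              ⟨x, (Finset.mem_inter.mp hxXG).1, ?_⟩
            intro hx
            rcases Finset.mem_union.mp hx with h | h
            · exact hxZ h
            · exact Finset.disjoint_left.mp hdisj (Finset.mem_inter.mp hxXG).2
                (Finset.mem_inter.mp h).2
          have hYC : Y ⊆ C.players := hYX.trans hXC
          have hYG : Y ∩ G.players = Z \ {g} :=
            union_inter_left' (hZG.trans hXGP) hdH
          have hYH : Y ∩ H.players = X ∩ H.players :=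
            union_inter_right' (hdisj.mono_left (hZG.trans hXGP)) hXHP
          have hinsZ : insert g (Z \ {g}) = Z := by
            rw [Finset.sdiff_singleton_eq_erase, Finset.insert_erase hgZ]
          refine hX2 Y hYss ((hCW Y hYC).mpr (Or.inr ⟨?_, ?_⟩))
          · rw [hYG, hinsZ]; exact hZw
          · rw [hYH]; exact hB2
        · -- Z avoids g, so Z is winning in C already
          have hZXG : Z ⊆ X ∩ G.players := by
            intro a ha
            rcases Finset.mem_insert.mp (hZ.subset ha) with rfl | h
            · exact absurd ha hgZ
            · exact h
          have hZX : Z ⊆ X := hZXG.trans Finset.inter_subset_left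
          have hZC : Z ⊆ C.players := hZX.trans hXC
          have hZGeq : Z ∩ G.players = Z :=
            Finset.inter_eq_left.mpr (hZXG.trans hXGP)
          have hZwC : C.winning Z := (hCW Z hZC).mpr (Or.inl (by rw [hZGeq]; exact hZw))
          rcases eq_or_lt_of_le hZX with heq | hlt
          · exfalso
            apply hA
            have hXZ : X ∩ G.players = Z := by
              apply Finset.Subset.antisymm _ hZXG
              rw [heq]
              exact Finset.inter_subset_left
            rw [hXZ]; exact hZw
          · exact hX2 Z hlt hZwC
      · refine ⟨hB2, ?_⟩
        intro Z hZ hZw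
        set Y := (X ∩ G.players) ∪ Z with hYdef
        have hZH : Z ⊆ H.players := H.winning_subset Z hZw
        have hYX : Y ⊆ X :=
          Finset.union_subset Finset.inter_subset_left
            (hZ.subset.trans Finset.inter_subset_left)
        have hYss : Y ⊂ X := by
          obtain ⟨x, hxXH, hxZ⟩ := Finset.exists_of_ssubset hZ
          refine Finset.ssubset_iff_of_subset hYX |>.mpr
            ⟨x, (Finset.mem_inter.mp hxXH).1, ?_⟩
          intro hx
          rcases Finset.mem_union.mp hx with h | h
          · exact Finset.disjoint_left.mp hdisj (Finset.mem_inter.mp h).2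
              (Finset.mem_inter.mp hxXH).2
          · exact hxZ h
        have hYC : Y ⊆ C.players := hYX.trans hXC
        have hYG : Y ∩ G.players = X ∩ G.players :=
          union_inter_left' hXGP ((hdisj.symm).mono_left hZH)
        have hYH : Y ∩ H.players = Z := union_inter_right' hdG hZH
        refine hX2 Y hYss ((hCW Y hYC).mpr (Or.inr ⟨?_, ?_⟩))
        · rw [hYG]; exact hB1
        · rw [hYH]; exact hZw
    -- now prove no dummies in G and in H
    constructor
    · intro p hp
      rw [not_dummy_iff]
      by_cases hpg : p = g
      · subst hpg
        obtain ⟨h, hh⟩ := H.players_nonempty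
        have hhC : h ∈ C.players := by rw [hCP]; exact Finset.mem_union_right _ hh
        obtain ⟨X, hXmin, hhX⟩ := (not_dummy_iff C h).mp (hnd h hhC)
        have hA : ¬ G.winning (X ∩ G.players) := by
          intro hA
          have := (decompA X hXmin hA).1 hhX
          exact Finset.disjoint_left.mp hdisj this hh
        have hB := (hCW X (C.winning_subset X hXmin.1)).mp hXmin.1
        rcases hB with h1 | hB
        · exact absurd h1 hA
        · obtain ⟨hGmin, _⟩ := decompB X hXmin hA hB
          exact ⟨_, hGmin, Finset.mem_insert_self _ _⟩
      · have hpC : p ∈ C.players := by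
          rw [hCP]
          exact Finset.mem_union_left _ (Finset.mem_sdiff.mpr
            ⟨hp, fun h => hpg (Finset.mem_singleton.mp h)⟩)
        obtain ⟨X, hXmin, hpX⟩ := (not_dummy_iff C p).mp (hnd p hpC)
        by_cases hA : G.winning (X ∩ G.players)
        · exact ⟨X, (decompA X hXmin hA).2, hpX⟩
        · have hB := (hCW X (C.winning_subset X hXmin.1)).mp hXmin.1
          rcases hB with h1 | hB
          · exact absurd h1 hA
          · obtain ⟨hGmin, _⟩ := decompB X hXmin hA hB
            exact ⟨_, hGmin, Finset.mem_insert_of_mem (Finset.mem_inter.mpr ⟨hpX, hp⟩)⟩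
    · intro h hh
      rw [not_dummy_iff]
      have hhC : h ∈ C.players := by rw [hCP]; exact Finset.mem_union_right _ hh
      obtain ⟨X, hXmin, hhX⟩ := (not_dummy_iff C h).mp (hnd h hhC)
      have hA : ¬ G.winning (X ∩ G.players) := by
        intro hA
        have := (decompA X hXmin hA).1 hhX
        exact Finset.disjoint_left.mp hdisj this hh
      have hB := (hCW X (C.winning_subset X hXmin.1)).mp hXmin.1
      rcases hB with h1 | hB
      · exact absurd h1 hA
      · obtain ⟨_, hHmin⟩ := decompB X hXmin hA hB
        exact ⟨_, hHmin, Finset.mem_inter.mpr ⟨hhX, hh⟩⟩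
  · -- backward direction
    rintro ⟨hG, hH⟩
    -- ∅ is not winning in H
    have hHne : ¬ H.winning ∅ := by
      intro h0
      obtain ⟨h, hh⟩ := H.players_nonempty
      obtain ⟨N, ⟨hN1, hN2⟩, hhN⟩ := (not_dummy_iff H h).mp (hH h hh)
      exact hN2 ∅ (Finset.empty_ssubset.mpr ⟨h, hhN⟩) h0
    obtain ⟨h0, hh0⟩ := H.players_nonempty
    obtain ⟨N0, hN0min, _⟩ := (not_dummy_iff H h0).mp (hH h0 hh0)
    intro p hpC
    rw [not_dummy_iff]
    rw [hCP] at hpC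
    rcases Finset.mem_union.mp hpC with hpG | hpH
    · obtain ⟨hp, hpg⟩ := Finset.mem_sdiff.mp hpG
      have hpg' : p ≠ g := fun h => hpg (Finset.mem_singleton.mpr h)
      obtain ⟨M, hMmin, hpM⟩ := (not_dummy_iff G p).mp (hG p hp)
      by_cases hgM : g ∈ M
      · exact ⟨_, key M N0 hMmin hgM hN0min,
          Finset.mem_union_left _ (Finset.mem_sdiff.mpr
            ⟨hpM, fun h => hpg' (Finset.mem_singleton.mp h)⟩)⟩
      · -- M itself is minimal winning in C
        refine ⟨M, ⟨?_, ?_⟩, hpM⟩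
        · have hMG : M ⊆ G.players := G.winning_subset M hMmin.1
          have hMC : M ⊆ C.players := by
            rw [hCP]
            intro a ha
            exact Finset.mem_union_left _ (Finset.mem_sdiff.mpr
              ⟨hMG ha, fun hc => hgM (Finset.mem_singleton.mp hc ▸ ha)⟩)
          exact (hCW M hMC).mpr (Or.inl (by
            rw [Finset.inter_eq_left.mpr hMG]; exact hMmin.1))
        · intro Y hY hYw
          have hMG : M ⊆ G.players := G.winning_subset M hMmin.1
          have hMC : M ⊆ C.players := by
            rw [hCP]
            intro a ha
            exact Finset.mem_union_left _ (Finset.mem_sdiff.mpr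
              ⟨hMG ha, fun hc => hgM (Finset.mem_singleton.mp hc ▸ ha)⟩)
          have hYC : Y ⊆ C.players := hY.subset.trans hMC
          rcases (hCW Y hYC).mp hYw with h1 | ⟨_, h3⟩
          · exact hMmin.2 _ (lt_of_le_of_lt Finset.inter_subset_left hY) h1
          · have : Y ∩ H.players = ∅ := by
              apply Finset.eq_empty_of_forall_notMem
              intro a ha
              obtain ⟨haY, haH⟩ := Finset.mem_inter.mp ha
              exact Finset.disjoint_left.mp hdisj (hMG (hY.subset haY)) haH
            rw [this] at h3
            exact hHne h3
    · obtain ⟨M, hMmin, hgM⟩ := (not_dummy_iff G g).mp (hG g hg)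
      obtain ⟨N, hNmin, hpN⟩ := (not_dummy_iff H p).mp (hH p hpH)
      exact ⟨_, key M N hMmin hgM hNmin, Finset.mem_union_right _ hpN⟩
end

section
/- Let n, k be integers with 1 ≤ k ≤ n, let h be a player of the k-out-of-n game H_{n,k}, and let G be a weighted simple game on a player set disjoint from that of H_{n,k}. Then the composition H_{n,k}∘_h G is a weighted game. -/
open scoped Classical

open SimpleGame

open Finset in
private lemma statement5_sum_split {α : Type} [DecidableEq α] (Hp Gp : Finset α) (h : α)
    (hdisj : Disjoint Hp Gp) (W : ℝ) (g : α → ℝ) {X : Finset α}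
    (hX : X ⊆ (Hp \ {h}) ∪ Gp) :
    ∑ i ∈ X, (if i ∈ Hp then W else g i)
      = (X ∩ Hp).card * W + ∑ i ∈ X ∩ Gp, g i := by
  have hXeq : X = (X ∩ Hp) ∪ (X ∩ Gp) := by
    ext a
    simp only [Finset.mem_union, Finset.mem_inter]
    constructor
    · intro ha
      rcases Finset.mem_union.mp (hX ha) with h1 | h1
      · exact Or.inl ⟨ha, (Finset.mem_sdiff.mp h1).1⟩
      · exact Or.inr ⟨ha, h1⟩
    · rintro (⟨ha, _⟩ | ⟨ha, _⟩) <;> exact ha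
  have hd : Disjoint (X ∩ Hp) (X ∩ Gp) :=
    hdisj.mono Finset.inter_subset_right Finset.inter_subset_right
  calc ∑ i ∈ X, (if i ∈ Hp then W else g i)
      = ∑ i ∈ (X ∩ Hp) ∪ (X ∩ Gp), (if i ∈ Hp then W else g i) := by rw [← hXeq]
    _ = (∑ i ∈ X ∩ Hp, (if i ∈ Hp then W else g i))
        + ∑ i ∈ X ∩ Gp, (if i ∈ Hp then W else g i) := Finset.sum_union hd
    _ = (X ∩ Hp).card * W + ∑ i ∈ X ∩ Gp, g i := by
        congr 1
        · rw [Finset.sum_congr rfl (fun a ha => if_pos (Finset.mem_inter.mp ha).2),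
            Finset.sum_const, nsmul_eq_mul]
        · refine Finset.sum_congr rfl fun a ha => if_neg fun haH => ?_
          exact Finset.disjoint_left.mp hdisj haH (Finset.mem_inter.mp ha).2

/-- the composition `H_{n,k} ∘_h G` of a `k`-out-of-`n` game with a
weighted game `G` is weighted. -/
theorem statement5 {α : Type} (n k : ℕ) (hk : 1 ≤ k) (hkn : k ≤ n)
    (H G C : SimpleGame α) (h : α)
    (hH : SimpleGame.IsKOutOfN H n k) (hh : h ∈ H.players)
    (hdisj : Disjoint H.players G.players)
    (hG : G.Weighted)
    (hC : SimpleGame.IsComposition C H G h) :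
    C.Weighted := by
  classical
  obtain ⟨w, q, hw, hwiff⟩ := hG
  obtain ⟨hCP, hCwin⟩ := hC
  obtain ⟨hHcard, hHwin⟩ := hH
  -- h is not a player of C
  have hhC : h ∉ C.players := by
    rw [hCP]
    intro hmem
    rcases Finset.mem_union.mp hmem with h1 | h1
    · exact (Finset.mem_sdiff.mp h1).2 (Finset.mem_singleton_self h)
    · exact Finset.disjoint_left.mp hdisj hh h1
  rcases le_or_gt q 0 with hq | hq
  · -- every subset of G.players is winning
    refine ⟨fun a => if a ∈ H.players then 1 else 0, (k : ℝ) - 1, ?_, ?_⟩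
    · intro i; dsimp only; split <;> norm_num
    · intro X hX
      have hXC : X ⊆ (H.players \ {h}) ∪ G.players := hCP ▸ hX
      have hsum := statement5_sum_split H.players G.players h hdisj 1 (fun _ => 0) hXC
      simp only [Finset.sum_const, smul_zero, mul_one, add_zero] at hsum
      rw [hsum, hCwin X hX]
      have hGwin : G.winning (X ∩ G.players) := by
        rw [hwiff _ Finset.inter_subset_right]
        exact hq.trans (Finset.sum_nonneg fun i _ => hw i)
      have hhn : h ∉ X ∩ H.players := fun hmem => hhC (hX (Finset.mem_inter.mp hmem).1)
      have hH1 : H.winning (X ∩ H.players) ↔ k ≤ (X ∩ H.players).card :=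
        hHwin _ Finset.inter_subset_right
      have hH2 : H.winning (insert h (X ∩ H.players)) ↔ k ≤ (X ∩ H.players).card + 1 := by
        rw [hHwin _ (Finset.insert_subset hh Finset.inter_subset_right),
          Finset.card_insert_of_notMem hhn]
      rw [hH1, hH2]
      constructor
      · rintro (h1 | ⟨h1, _⟩)
        · have : (k : ℝ) ≤ (X ∩ H.players).card := by exact_mod_cast h1
          linarith
        · have : (k : ℝ) ≤ (X ∩ H.players).card + 1 := by exact_mod_cast h1
          linarith
      · intro h1
        refine Or.inr ⟨?_, hGwin⟩
        have : (k : ℝ) ≤ (X ∩ H.players).card + 1 := by linarith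
        exact_mod_cast this
  · -- q > 0
    set S : ℝ := ∑ i ∈ G.players, w i / q with hS
    have hS0 : 0 ≤ S := Finset.sum_nonneg fun i _ => div_nonneg (hw i) hq.le
    set W : ℝ := S + 1 with hW
    have hW1 : (1 : ℝ) ≤ W := by linarith
    refine ⟨fun a => if a ∈ H.players then W else if a ∈ G.players then w a / q else 0,
      ((k : ℝ) - 1) * W + 1, ?_, ?_⟩
    · intro i; dsimp only
      split
      · linarith
      · split
        · exact div_nonneg (hw _) hq.le
        · exact le_refl 0
    · intro X hX
      have hXC : X ⊆ (H.players \ {h}) ∪ G.players := hCP ▸ hX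
      have hsum := statement5_sum_split H.players G.players h hdisj W
        (fun a => if a ∈ G.players then w a / q else 0) hXC
      have hginter : ∀ a ∈ X ∩ G.players,
          (if a ∈ G.players then w a / q else 0) = w a / q := fun a ha =>
        if_pos (Finset.mem_inter.mp ha).2
      rw [Finset.sum_congr rfl hginter] at hsum
      rw [hsum, hCwin X hX]
      set m : ℕ := (X ∩ H.players).card with hm
      set s : ℝ := ∑ i ∈ X ∩ G.players, w i / q with hs
      have hs0 : 0 ≤ s := Finset.sum_nonneg fun i _ => div_nonneg (hw i) hq.le
      have hsS : s ≤ S :=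
        Finset.sum_le_sum_of_subset_of_nonneg Finset.inter_subset_right
          (fun i _ _ => div_nonneg (hw i) hq.le)
      have hGwin : G.winning (X ∩ G.players) ↔ 1 ≤ s := by
        rw [hwiff _ Finset.inter_subset_right, hs, ← Finset.sum_div, le_div_iff₀ hq, one_mul]
      have hhn : h ∉ X ∩ H.players := fun hmem => hhC (hX (Finset.mem_inter.mp hmem).1)
      have hH1 : H.winning (X ∩ H.players) ↔ k ≤ m :=
        hHwin _ Finset.inter_subset_right
      have hH2 : H.winning (insert h (X ∩ H.players)) ↔ k ≤ m + 1 := by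
        rw [hHwin _ (Finset.insert_subset hh Finset.inter_subset_right),
          Finset.card_insert_of_notMem hhn]
      rw [hH1, hH2, hGwin]
      constructor
      · rintro (h1 | ⟨h1, h2⟩)
        · have : (k : ℝ) ≤ m := by exact_mod_cast h1
          nlinarith
        · have : (k : ℝ) ≤ m + 1 := by exact_mod_cast h1
          nlinarith
      · intro h1
        rcases le_or_gt k m with h2 | h2
        · exact Or.inl h2
        · have hm1 : (m : ℝ) ≤ (k : ℝ) - 1 := by
            have h3 : m + 1 ≤ k := h2
            have h4 : ((m : ℝ) + 1) ≤ k := by exact_mod_cast h3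
            linarith
          refine Or.inr ⟨?_, ?_⟩
          · by_contra h5
            push_neg at h5
            have h6 : m + 2 ≤ k := h5
            have h7 : (m : ℝ) + 2 ≤ (k : ℝ) := by exact_mod_cast h6
            have h8 : (0:ℝ) ≤ ((k:ℝ) - 2 - m) * W :=
              mul_nonneg (by linarith) (by linarith)
            linarith
          · nlinarith
end

section
/- Let G and H be simple games on disjoint player sets, and let g, g' ∈ P_G be players with g ≻_G g' such that g' is not a dummy of G. Suppose H has no dummies, H is not a unanimity game (i.e. W_H ≠ {P_H}), and H is not an anti-unanimity game (i.e. W_H is not the collection of all nonempty subsets of P_H). Then the composition G∘_g H is not complete. -/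
open scoped Classical

open SimpleGame

lemma aux_exists_minWinning {α : Type} (G : SimpleGame α) :
    ∀ X : Finset α, G.winning X → ∃ S ⊆ X, G.MinWinning S := by
  intro X
  induction X using Finset.strongInductionOn with
  | _ X ih =>
    intro hX
    by_cases h : ∀ Y ⊂ X, ¬ G.winning Y
    · exact ⟨X, subset_rfl, hX, h⟩
    · push_neg at h
      obtain ⟨Y, hYX, hY⟩ := h
      obtain ⟨S, hS, hmin⟩ := ih Y hYX hY
      exact ⟨S, hS.trans hYX.subset, hmin⟩

lemma aux_not_dummy {α : Type} {G : SimpleGame α} {p : α} (h : ¬ G.IsDummy p) :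
    ∃ S, G.MinWinning S ∧ p ∈ S := by
  unfold SimpleGame.IsDummy at h
  push_neg at h
  exact h

lemma aux_empty_losing {α : Type} {H : SimpleGame α}
    (hHnd : ∀ p ∈ H.players, ¬ H.IsDummy p) : ¬ H.winning ∅ := by
  intro h0
  obtain ⟨p, hp⟩ := H.players_nonempty
  obtain ⟨S, hS, hpS⟩ := aux_not_dummy (hHnd p hp)
  exact hS.2 ∅ (Finset.empty_ssubset.2 ⟨p, hpS⟩) h0

lemma aux_comp_winning {α : Type} {C G H : SimpleGame α} {g : α}
    (hdisj : Disjoint G.players H.players)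
    (hCp : C.players = (G.players \ {g}) ∪ H.players)
    (hCw : ∀ X ⊆ C.players,
      (C.winning X ↔ (G.winning (X ∩ G.players) ∨
        (G.winning (insert g (X ∩ G.players)) ∧ H.winning (X ∩ H.players)))))
    {A B : Finset α} (hA : A ⊆ G.players \ {g}) (hB : B ⊆ H.players) :
    (C.winning (A ∪ B) ↔ (G.winning A ∨ (G.winning (insert g A) ∧ H.winning B))) := by
  have hAG : A ⊆ G.players := hA.trans (Finset.sdiff_subset)
  have h1 : (A ∪ B) ∩ G.players = A := by
    rw [Finset.union_inter_distrib_right, Finset.inter_eq_left.2 hAG,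
      Finset.disjoint_iff_inter_eq_empty.1 (hdisj.symm.mono_left hB), Finset.union_empty]
  have h2 : (A ∪ B) ∩ H.players = B := by
    rw [Finset.union_inter_distrib_right, Finset.inter_eq_left.2 hB,
      Finset.disjoint_iff_inter_eq_empty.1 (hdisj.mono_left hAG), Finset.empty_union]
  have hsub : A ∪ B ⊆ C.players := by
    rw [hCp]; exact Finset.union_subset_union hA hB
  rw [hCw (A ∪ B) hsub, h1, h2]

/-- if `g ≻_G g'`, `g'` is not a dummy, and `H` has no dummies and
is neither a unanimity game nor an anti-unanimity game, then `G ∘_g H` is not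
complete. -/
theorem statement6 {α : Type} (G H C : SimpleGame α) (g g' : α)
    (hdisj : Disjoint G.players H.players)
    (hg : g ∈ G.players) (hg' : g' ∈ G.players)
    (hgt : G.Gt g g') (hnd : ¬ G.IsDummy g')
    (hHnd : ∀ p ∈ H.players, ¬ H.IsDummy p)
    (hnotU : ¬ (∀ X : Finset α, H.winning X ↔ X = H.players))
    (hnotA : ¬ (∀ X : Finset α, H.winning X ↔ (X ⊆ H.players ∧ X.Nonempty)))
    (hC : SimpleGame.IsComposition C G H g) :
    ¬ C.Complete := by
  classical
  intro hcomp
  obtain ⟨hCp, hCw⟩ := hC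
  obtain ⟨hgeq, hngeq⟩ := hgt
  have hgg' : g ≠ g' := by rintro rfl; exact hngeq (fun X _ _ _ h => h)
  -- witness from ¬ (g' ⪰ g)
  unfold SimpleGame.Geq at hngeq
  push_neg at hngeq
  obtain ⟨Z, hZG, hg'Z, hgZ, hwgZ, hlg'Z⟩ := hngeq
  -- minimal winning coalition of G containing g'
  obtain ⟨M, hM, hg'M⟩ := aux_not_dummy hnd
  have hMG : M ⊆ G.players := G.winning_subset M hM.1
  have hHempty : ¬ H.winning ∅ := aux_empty_losing hHnd
  have hg'H : g' ∉ H.players := Finset.disjoint_left.1 hdisj hg'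
  -- choose h0 and direction-2 witness X2
  have key2 : ∃ h0 ∈ H.players, ∃ X2 ⊆ C.players, g' ∉ X2 ∧ h0 ∉ X2 ∧
      C.winning (insert g' X2) ∧ ¬ C.winning (insert h0 X2) := by
    by_cases hgM : g ∈ M
    · -- h0 a non-vetoer
      have hexV : ∃ h ∈ H.players, ∃ T, H.winning T ∧ h ∉ T := by
        by_contra hv
        push_neg at hv
        apply hnotU
        intro X
        constructor
        · intro hX
          exact Finset.Subset.antisymm (H.winning_subset X hX)
            (fun p hp => hv p hp X hX)
        · rintro rfl
          obtain ⟨W, hW⟩ := H.winning_nonempty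
          exact H.winning_mono hW (H.winning_subset W hW) subset_rfl
      obtain ⟨h0, hh0H, T, hTw, hh0T⟩ := hexV
      have hTH : T ⊆ H.players := H.winning_subset T hTw
      refine ⟨h0, hh0H, ((M.erase g).erase g') ∪ T, ?_, ?_, ?_, ?_, ?_⟩
      · rw [hCp]
        refine Finset.union_subset_union ?_ hTH
        intro a ha
        simp only [Finset.mem_erase] at ha
        simp only [Finset.mem_sdiff, Finset.mem_singleton]
        exact ⟨hMG ha.2.2, ha.2.1⟩
      · simp only [Finset.mem_union, Finset.mem_erase, not_or]
        exact ⟨fun h => h.1 rfl, fun h => hg'H (hTH h)⟩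
      · simp only [Finset.mem_union, not_or]
        exact ⟨fun h => Finset.disjoint_left.1 hdisj (hMG (Finset.mem_of_mem_erase (Finset.mem_of_mem_erase h))) hh0H, hh0T⟩
      · have hge : g' ∈ M.erase g := Finset.mem_erase.2 ⟨fun h => hgg' h.symm, hg'M⟩
        rw [← Finset.insert_union, Finset.insert_erase hge]
        have hsub : M.erase g ⊆ G.players \ {g} := by
          intro a ha
          simp only [Finset.mem_erase] at ha
          simp only [Finset.mem_sdiff, Finset.mem_singleton]
          exact ⟨hMG ha.2, ha.1⟩
        rw [aux_comp_winning hdisj hCp hCw hsub hTH]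
        right
        rw [Finset.insert_erase hgM]
        exact ⟨hM.1, hTw⟩
      · rw [← Finset.union_insert]
        have hsub : (M.erase g).erase g' ⊆ G.players \ {g} := by
          intro a ha
          simp only [Finset.mem_erase] at ha
          simp only [Finset.mem_sdiff, Finset.mem_singleton]
          exact ⟨hMG ha.2.2, ha.2.1⟩
        have hinsTH : insert h0 T ⊆ H.players := Finset.insert_subset hh0H hTH
        rw [aux_comp_winning hdisj hCp hCw hsub hinsTH]
        rintro (hw | ⟨hw, -⟩)
        · refine hM.2 _ ?_ hw
          refine Finset.ssubset_iff_of_subset ((Finset.erase_subset _ _).trans (Finset.erase_subset _ _)) |>.2 ⟨g, hgM, ?_⟩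
          simp only [Finset.mem_erase]
          exact fun h => h.2.1 rfl
        · rw [Finset.erase_right_comm, Finset.insert_erase
            (Finset.mem_erase.2 ⟨hgg', hgM⟩)] at hw
          exact hM.2 _ (Finset.erase_ssubset hg'M) hw
    · -- g ∉ M : use a losing nonempty coalition of H
      have hexL : ∃ X, X ⊆ H.players ∧ X.Nonempty ∧ ¬ H.winning X := by
        by_contra hA2
        push_neg at hA2
        apply hnotA
        intro X
        constructor
        · intro hX
          refine ⟨H.winning_subset X hX, ?_⟩
          rw [Finset.nonempty_iff_ne_empty]
          rintro rfl
          exact hHempty hX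
        · rintro ⟨h1, h2⟩
          exact hA2 X h1 h2
      obtain ⟨X, hXH, ⟨h0, hh0X⟩, hXl⟩ := hexL
      have hh0H : h0 ∈ H.players := hXH hh0X
      refine ⟨h0, hh0H, (M.erase g') ∪ (X.erase h0), ?_, ?_, ?_, ?_, ?_⟩
      · rw [hCp]
        refine Finset.union_subset_union ?_ ((Finset.erase_subset _ _).trans hXH)
        intro a ha
        simp only [Finset.mem_erase] at ha
        simp only [Finset.mem_sdiff, Finset.mem_singleton]
        exact ⟨hMG ha.2, fun h => hgM (h ▸ ha.2)⟩
      · simp only [Finset.mem_union, Finset.mem_erase, not_or]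
        exact ⟨fun h => h.1 rfl, fun h => hg'H (hXH h.2)⟩
      · simp only [Finset.mem_union, Finset.mem_erase, not_or]
        exact ⟨fun h => Finset.disjoint_left.1 hdisj (hMG h.2) hh0H, fun h => h.1 rfl⟩
      · rw [← Finset.insert_union, Finset.insert_erase hg'M]
        have hsub : M ⊆ G.players \ {g} := by
          intro a ha
          simp only [Finset.mem_sdiff, Finset.mem_singleton]
          exact ⟨hMG ha, fun h => hgM (h ▸ ha)⟩
        rw [aux_comp_winning hdisj hCp hCw hsub ((Finset.erase_subset _ _).trans hXH)]
        exact Or.inl hM.1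
      · rw [← Finset.union_insert, Finset.insert_erase hh0X]
        have hsub : M.erase g' ⊆ G.players \ {g} := by
          intro a ha
          simp only [Finset.mem_erase] at ha
          simp only [Finset.mem_sdiff, Finset.mem_singleton]
          exact ⟨hMG ha.2, fun h => hgM (h ▸ ha.2)⟩
        rw [aux_comp_winning hdisj hCp hCw hsub hXH]
        rintro (hw | ⟨-, hw⟩)
        · exact hM.2 _ (Finset.erase_ssubset hg'M) hw
        · exact hXl hw
  obtain ⟨h0, hh0H, X2, hX2C, hg'X2, hh0X2, hwX2, hlX2⟩ := key2
  -- direction 1 witness X1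
  obtain ⟨S, hS, hh0S⟩ := aux_not_dummy (hHnd h0 hh0H)
  have hSH : S ⊆ H.players := H.winning_subset S hS.1
  have hZsub : Z ⊆ G.players \ {g} := by
    intro a ha
    simp only [Finset.mem_sdiff, Finset.mem_singleton]
    exact ⟨hZG ha, fun h => hgZ (h ▸ ha)⟩
  set X1 : Finset α := Z ∪ (S.erase h0) with hX1def
  have hX1C : X1 ⊆ C.players := by
    rw [hCp]
    exact Finset.union_subset_union hZsub ((Finset.erase_subset _ _).trans hSH)
  have hg'X1 : g' ∉ X1 := by
    simp only [hX1def, Finset.mem_union, not_or]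
    exact ⟨hg'Z, fun h => hg'H (hSH (Finset.mem_of_mem_erase h))⟩
  have hh0X1 : h0 ∉ X1 := by
    simp only [hX1def, Finset.mem_union, Finset.mem_erase, not_or]
    exact ⟨fun h => Finset.disjoint_left.1 hdisj (hZG h) hh0H, fun h => h.1 rfl⟩
  have hwX1 : C.winning (insert h0 X1) := by
    rw [hX1def, ← Finset.union_insert, Finset.insert_erase hh0S]
    rw [aux_comp_winning hdisj hCp hCw hZsub hSH]
    exact Or.inr ⟨hwgZ, hS.1⟩
  have hlX1 : ¬ C.winning (insert g' X1) := by
    rw [hX1def, ← Finset.insert_union]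
    have hsub : insert g' Z ⊆ G.players \ {g} := by
      refine Finset.insert_subset ?_ hZsub
      simp only [Finset.mem_sdiff, Finset.mem_singleton]
      exact ⟨hg', fun h => hgg' h.symm⟩
    rw [aux_comp_winning hdisj hCp hCw hsub ((Finset.erase_subset _ _).trans hSH)]
    rintro (hw | ⟨-, hw⟩)
    · exact hlg'Z hw
    · exact hS.2 _ (Finset.erase_ssubset hh0S) hw
  -- conclude
  have hg'C : g' ∈ C.players := by
    rw [hCp]
    exact Finset.mem_union_left _ (Finset.mem_sdiff.2 ⟨hg', fun h => hgg' (Finset.mem_singleton.1 h).symm⟩)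
  have hh0C : h0 ∈ C.players := by
    rw [hCp]; exact Finset.mem_union_right _ hh0H
  rcases hcomp g' hg'C h0 hh0C with hge | hge
  · exact hlX1 (hge X1 hX1C hg'X1 hh0X1 hwX1)
  · exact hlX2 (hge X2 hX2C hh0X2 hg'X2 hwX2)
end

section
/- Let G and H be complete simple games on disjoint player sets, let g ∈ P_G be a player such that x ⪰_G g for every x ∈ P_G (g is among the least desirable players of G) and g is not a dummy of G, and suppose the empty coalition is losing in H. Let C = G∘_g H. Then: (i) for all x, y ∈ P_G∖{g}: x ⪰_G y if and only if x ⪰_C y, and x ≻_G y if and only if x ≻_C y; (ii) for all x, y ∈ P_H: x ⪰_H y if and only if x ⪰_C y, and x ≻_H y if and only if x ≻_C y. -/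
open scoped Classical

open SimpleGame
/-- composing complete games over a least desirable non-dummy
player `g` of `G` (with the empty coalition losing in `H`) preserves the
desirability relations within `P_G \ {g}` and within `P_H`. -/
theorem statement7 {α : Type} (G H C : SimpleGame α) (g : α)
    (hdisj : Disjoint G.players H.players)
    (hGc : G.Complete) (hHc : H.Complete)
    (hg : g ∈ G.players)
    (hleast : ∀ x ∈ G.players, G.Geq x g)
    (hnd : ¬ G.IsDummy g)
    (hempty : ¬ H.winning ∅)
    (hC : SimpleGame.IsComposition C G H g) :
    (∀ x ∈ G.players, ∀ y ∈ G.players, x ≠ g → y ≠ g →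
        ((G.Geq x y ↔ C.Geq x y) ∧ (G.Gt x y ↔ C.Gt x y))) ∧
    (∀ x ∈ H.players, ∀ y ∈ H.players,
        ((H.Geq x y ↔ C.Geq x y) ∧ (H.Gt x y ↔ C.Gt x y))) := by
  obtain ⟨hCp, hCw⟩ := hC
  have hGH : ∀ a ∈ G.players, a ∉ H.players := fun a ha => Finset.disjoint_left.mp hdisj ha
  have hHG : ∀ a ∈ H.players, a ∉ G.players := fun a ha => Finset.disjoint_right.mp hdisj ha
  have hgC : g ∉ C.players := by
    rw [hCp]
    simp only [Finset.mem_union, Finset.mem_sdiff, Finset.mem_singleton, not_or, not_and]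
    exact ⟨fun _ => by simp, hGH g hg⟩
  have memCG : ∀ x ∈ G.players, x ≠ g → x ∈ C.players := by
    intro x hx hxg
    rw [hCp]
    exact Finset.mem_union_left _ (Finset.mem_sdiff.mpr ⟨hx, by simp [hxg]⟩)
  have memCH : ∀ x ∈ H.players, x ∈ C.players := by
    intro x hx; rw [hCp]; exact Finset.mem_union_right _ hx
  -- Part (i) forward
  have fwdG : ∀ x ∈ G.players, ∀ y ∈ G.players, x ≠ g → y ≠ g → G.Geq x y → C.Geq x y := by
    intro x hx y hy hxg hyg hG X hX hxX hyX hw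
    have hgA : g ∉ X ∩ G.players := fun h => hgC (hX (Finset.mem_inter.mp h).1)
    have hAsub : X ∩ G.players ⊆ G.players := Finset.inter_subset_right
    have hxA : x ∉ X ∩ G.players := fun h => hxX (Finset.mem_inter.mp h).1
    have hyA : y ∉ X ∩ G.players := fun h => hyX (Finset.mem_inter.mp h).1
    rw [hCw _ (Finset.insert_subset (memCG y hy hyg) hX),
      Finset.insert_inter_of_mem hy, Finset.insert_inter_of_notMem (hGH y hy)] at hw
    rw [hCw _ (Finset.insert_subset (memCG x hx hxg) hX),
      Finset.insert_inter_of_mem hx, Finset.insert_inter_of_notMem (hGH x hx)]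
    rcases hw with h | ⟨h1, h2⟩
    · exact Or.inl (hG _ hAsub hxA hyA h)
    · refine Or.inr ⟨?_, h2⟩
      have := hG (insert g (X ∩ G.players)) (Finset.insert_subset hg hAsub)
        (by simp only [Finset.mem_insert, not_or]; exact ⟨hxg, hxA⟩) (by simp only [Finset.mem_insert, not_or]; exact ⟨hyg, hyA⟩) (by rwa [Finset.insert_comm])
      rwa [Finset.insert_comm] at this
  -- Part (i) backward
  have bwdG : ∀ x ∈ G.players, ∀ y ∈ G.players, x ≠ g → y ≠ g → C.Geq x y → G.Geq x y := by
    intro x hx y hy hxg hyg hc A hA hxA hyA hw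
    by_cases hgA : g ∈ A
    · obtain ⟨W, hW⟩ := H.winning_nonempty
      have hWsub : W ⊆ H.players := H.winning_subset W hW
      set A' := A.erase g with hA'def
      have hA'G : A' ⊆ G.players := (Finset.erase_subset _ _).trans hA
      set X := A' ∪ W with hXdef
      have hXc : X ⊆ C.players := by
        rw [hCp]
        refine Finset.union_subset_union ?_ hWsub
        intro a ha
        exact Finset.mem_sdiff.mpr ⟨hA'G ha, by
          simpa using (Finset.mem_erase.mp ha).1⟩
      have hxX : x ∉ X := by
        intro h
        rcases Finset.mem_union.mp h with h | h
        · exact hxA (Finset.mem_of_mem_erase h)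
        · exact hGH x hx (hWsub h)
      have hyX : y ∉ X := by
        intro h
        rcases Finset.mem_union.mp h with h | h
        · exact hyA (Finset.mem_of_mem_erase h)
        · exact hGH y hy (hWsub h)
      have hXG : X ∩ G.players = A' := by
        rw [hXdef, Finset.union_inter_distrib_right,
          Finset.inter_eq_left.mpr hA'G,
          Finset.disjoint_iff_inter_eq_empty.mp (hdisj.symm.mono_left hWsub),
          Finset.union_empty]
      have hXH : X ∩ H.players = W := by
        rw [hXdef, Finset.union_inter_distrib_right,
          Finset.disjoint_iff_inter_eq_empty.mp (hdisj.mono_left hA'G),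
          Finset.inter_eq_left.mpr hWsub, Finset.empty_union]
      have hins : insert g A' = A := Finset.insert_erase hgA
      have hwin : C.winning (insert y X) := by
        rw [hCw _ (Finset.insert_subset (memCG y hy hyg) hXc),
          Finset.insert_inter_of_mem hy, hXG,
          Finset.insert_inter_of_notMem (hGH y hy), hXH]
        refine Or.inr ⟨?_, hW⟩
        rw [Finset.insert_comm, hins]
        exact hw
      have := hc X hXc hxX hyX hwin
      rw [hCw _ (Finset.insert_subset (memCG x hx hxg) hXc),
        Finset.insert_inter_of_mem hx, hXG,
        Finset.insert_inter_of_notMem (hGH x hx), hXH] at this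
      rcases this with h | ⟨h, _⟩
      · exact G.winning_mono h
          (Finset.insert_subset_insert _ (Finset.erase_subset _ _))
          (Finset.insert_subset hx hA)
      · rwa [Finset.insert_comm, hins] at h
    · have hAc : A ⊆ C.players := fun a ha =>
        memCG a (hA ha) (fun h => hgA (h ▸ ha))
      have hwin : C.winning (insert y A) := by
        rw [hCw _ (Finset.insert_subset (memCG y hy hyg) hAc),
          Finset.inter_eq_left.mpr (Finset.insert_subset hy hA)]
        exact Or.inl hw
      have := hc A hAc hxA hyA hwin
      rw [hCw _ (Finset.insert_subset (memCG x hx hxg) hAc),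
        Finset.inter_eq_left.mpr (Finset.insert_subset hx hA)] at this
      rcases this with h | ⟨_, h2⟩
      · exact h
      · exact absurd (by
          rwa [Finset.disjoint_iff_inter_eq_empty.mp
            (hdisj.mono_left (Finset.insert_subset hx hA))] at h2) hempty
  -- Part (ii) forward
  have fwdH : ∀ x ∈ H.players, ∀ y ∈ H.players, H.Geq x y → C.Geq x y := by
    intro x hx y hy hH X hX hxX hyX hw
    have hBsub : X ∩ H.players ⊆ H.players := Finset.inter_subset_right
    have hxB : x ∉ X ∩ H.players := fun h => hxX (Finset.mem_inter.mp h).1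
    have hyB : y ∉ X ∩ H.players := fun h => hyX (Finset.mem_inter.mp h).1
    rw [hCw _ (Finset.insert_subset (memCH y hy) hX),
      Finset.insert_inter_of_notMem (hHG y hy), Finset.insert_inter_of_mem hy] at hw
    rw [hCw _ (Finset.insert_subset (memCH x hx) hX),
      Finset.insert_inter_of_notMem (hHG x hx), Finset.insert_inter_of_mem hx]
    rcases hw with h | ⟨h1, h2⟩
    · exact Or.inl h
    · exact Or.inr ⟨h1, hH _ hBsub hxB hyB h2⟩
  -- Part (ii) backward
  have bwdH : ∀ x ∈ H.players, ∀ y ∈ H.players, C.Geq x y → H.Geq x y := by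
    intro x hx y hy hc B hB hxB hyB hw
    obtain ⟨M, hM, hgM⟩ : ∃ M, G.MinWinning M ∧ g ∈ M := by
      unfold SimpleGame.IsDummy at hnd
      push_neg at hnd
      exact hnd
    have hMsub : M ⊆ G.players := G.winning_subset M hM.1
    set A := M.erase g with hAdef
    have hAG : A ⊆ G.players := (Finset.erase_subset _ _).trans hMsub
    have hAlose : ¬ G.winning A := hM.2 A (Finset.erase_ssubset hgM)
    have hins : insert g A = M := Finset.insert_erase hgM
    set X := A ∪ B with hXdef
    have hXc : X ⊆ C.players := by
      rw [hCp]
      refine Finset.union_subset_union ?_ hB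
      intro a ha
      exact Finset.mem_sdiff.mpr ⟨hAG ha, by simpa using (Finset.mem_erase.mp ha).1⟩
    have hxX : x ∉ X := by
      intro h
      rcases Finset.mem_union.mp h with h | h
      · exact hHG x hx (hAG h)
      · exact hxB h
    have hyX : y ∉ X := by
      intro h
      rcases Finset.mem_union.mp h with h | h
      · exact hHG y hy (hAG h)
      · exact hyB h
    have hXG : X ∩ G.players = A := by
      rw [hXdef, Finset.union_inter_distrib_right,
        Finset.inter_eq_left.mpr hAG,
        Finset.disjoint_iff_inter_eq_empty.mp (hdisj.symm.mono_left hB),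
        Finset.union_empty]
    have hXH : X ∩ H.players = B := by
      rw [hXdef, Finset.union_inter_distrib_right,
        Finset.disjoint_iff_inter_eq_empty.mp (hdisj.mono_left hAG),
        Finset.inter_eq_left.mpr hB, Finset.empty_union]
    have hwin : C.winning (insert y X) := by
      rw [hCw _ (Finset.insert_subset (memCH y hy) hXc),
        Finset.insert_inter_of_notMem (hHG y hy), hXG,
        Finset.insert_inter_of_mem hy, hXH]
      exact Or.inr ⟨hins ▸ hM.1, hw⟩
    have := hc X hXc hxX hyX hwin
    rw [hCw _ (Finset.insert_subset (memCH x hx) hXc),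
      Finset.insert_inter_of_notMem (hHG x hx), hXG,
      Finset.insert_inter_of_mem hx, hXH] at this
    rcases this with h | ⟨_, h2⟩
    · exact absurd h hAlose
    · exact h2
  constructor
  · intro x hx y hy hxg hyg
    have e1 : G.Geq x y ↔ C.Geq x y :=
      ⟨fwdG x hx y hy hxg hyg, bwdG x hx y hy hxg hyg⟩
    have e2 : G.Geq y x ↔ C.Geq y x :=
      ⟨fwdG y hy x hx hyg hxg, bwdG y hy x hx hyg hxg⟩
    exact ⟨e1, and_congr e1 (not_congr e2)⟩
  · intro x hx y hy
    have e1 : H.Geq x y ↔ C.Geq x y := ⟨fwdH x hx y hy, bwdH x hx y hy⟩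
    have e2 : H.Geq y x ↔ C.Geq y x := ⟨fwdH y hy x hx, bwdH y hy x hx⟩
    exact ⟨e1, and_congr e1 (not_congr e2)⟩
end

section
/- For all integers n and k with 1 < k < n, the k-out-of-n game H_{n,k} is indecomposable. -/
open scoped Classical

open SimpleGame
/-- for `1 < k < n`, the `k`-out-of-`n` game is indecomposable. -/
theorem statement9 {α : Type} (n k : ℕ) (h1 : 1 < k) (h2 : k < n)
    (G : SimpleGame α) (hG : SimpleGame.IsKOutOfN G n k) :
    ¬ G.Decomposable := by
  rintro ⟨β, H, K, C, h, hdisj, hhH, hH2, hK2, ⟨hP, hW⟩, σ, hinj, himg, hwin⟩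
  obtain ⟨hGcard, hGwin⟩ := hG
  -- C is also a k-out-of-n game
  have hCcard : C.players.card = n := by
    rw [← himg, Finset.card_image_of_injOn hinj, hGcard]
  have hCwin : ∀ Y ⊆ C.players, (C.winning Y ↔ k ≤ Y.card) := by
    intro Y hY
    rw [← himg] at hY
    obtain ⟨X, hXsub, rfl⟩ := Finset.subset_image_iff.mp hY
    rw [← hwin X hXsub, hGwin X hXsub,
      Finset.card_image_of_injOn (hinj.mono (Finset.coe_subset.mpr hXsub))]
  set A := H.players \ {h} with hA
  set B := K.players with hB
  have hAsub : A ⊆ H.players := Finset.sdiff_subset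
  have hAB : Disjoint A B := hdisj.mono_left hAsub
  -- winning condition via the composition
  have main : ∀ S ⊆ A, ∀ T ⊆ B,
      (C.winning (S ∪ T) ↔ H.winning S ∨ (H.winning (insert h S) ∧ K.winning T)) := by
    intro S hS T hT
    have hSH : S ⊆ H.players := hS.trans hAsub
    have hTH : T ∩ H.players = ∅ :=
      Finset.disjoint_iff_inter_eq_empty.mp ((hdisj.symm.mono_left hT))
    have hSK : S ∩ K.players = ∅ :=
      Finset.disjoint_iff_inter_eq_empty.mp (hdisj.mono_left hSH)
    have hsub : S ∪ T ⊆ C.players := by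
      rw [hP]; exact Finset.union_subset_union hS hT
    have e1 : (S ∪ T) ∩ H.players = S := by
      rw [Finset.union_inter_distrib_right, Finset.inter_eq_left.mpr hSH, hTH,
        Finset.union_empty]
    have e2 : (S ∪ T) ∩ K.players = T := by
      rw [Finset.union_inter_distrib_right, hSK, Finset.inter_eq_left.mpr hT,
        Finset.empty_union]
    rw [hW _ hsub, e1, e2]
  -- winning condition via cardinality
  have cardw : ∀ S ⊆ A, ∀ T ⊆ B, (C.winning (S ∪ T) ↔ k ≤ S.card + T.card) := by
    intro S hS T hT
    have hd : Disjoint S T := hAB.mono hS hT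
    have hsub : S ∪ T ⊆ C.players := by
      rw [hP]; exact Finset.union_subset_union hS hT
    rw [hCwin _ hsub, Finset.card_union_of_disjoint hd]
  -- a winning coalition in H contained in A has at least k players
  have no_small : ∀ S ⊆ A, H.winning S → k ≤ S.card := by
    intro S hS hw
    have := (cardw S hS ∅ (Finset.empty_subset _)).mp
      ((main S hS ∅ (Finset.empty_subset _)).mpr (Or.inl hw))
    simpa using this
  -- cardinalities
  have hAcard : A.card = H.players.card - 1 := by
    rw [hA, Finset.card_sdiff_of_subset (Finset.singleton_subset_iff.mpr hhH), Finset.card_singleton]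
  have hn : A.card + B.card = n := by
    rw [← Finset.card_union_of_disjoint hAB, ← hP, hCcard]
  have hA1 : 1 ≤ A.card := by omega
  rcases le_or_gt k B.card with hk | hk
  · -- Case 1 : k ≤ |B|
    obtain ⟨T, hT, hTc⟩ := Finset.exists_subset_card_eq hk
    obtain ⟨T', hT', hT'c⟩ := Finset.exists_subset_card_eq (show k - 1 ≤ B.card by omega)
    obtain ⟨s, hs⟩ := Finset.card_pos.mp hA1
    have hsA : {s} ⊆ A := Finset.singleton_subset_iff.mpr hs
    have hTwin : C.winning (∅ ∪ T) := by
      rw [cardw ∅ (Finset.empty_subset _) T hT]; simp [hTc]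
    have hHh : H.winning (insert h ∅) := by
      rcases (main ∅ (Finset.empty_subset _) T hT).mp hTwin with h0 | ⟨hh, _⟩
      · exact absurd (no_small ∅ (Finset.empty_subset _) h0) (by simp; omega)
      · exact hh
    have hT'lose : ¬ C.winning (∅ ∪ T') := by
      rw [cardw ∅ (Finset.empty_subset _) T' hT']; simp [hT'c]; omega
    have hKT' : ¬ K.winning T' := fun hk' =>
      hT'lose ((main ∅ (Finset.empty_subset _) T' hT').mpr (Or.inr ⟨hHh, hk'⟩))
    have hXwin : C.winning ({s} ∪ T') := by
      rw [cardw {s} hsA T' hT']; simp [hT'c]; omega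
    rcases (main {s} hsA T' hT').mp hXwin with hs' | ⟨_, hk'⟩
    · have := no_small {s} hsA hs'
      simp at this; omega
    · exact hKT' hk'
  · -- Case 2 : |B| < k
    obtain ⟨S, hS, hSc⟩ := Finset.exists_subset_card_eq (show k - B.card ≤ A.card by omega)
    obtain ⟨T', hT', hT'c⟩ :=
      Finset.exists_subset_card_eq (show B.card - 1 ≤ B.card by omega)
    have hBB : B ⊆ B := le_refl B
    have hSBwin : C.winning (S ∪ B) := by
      rw [cardw S hS B hBB]; omega
    have hHS : ¬ H.winning S := fun hw => by
      have := no_small S hS hw; omega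
    have hHS' : H.winning (insert h S) := by
      rcases (main S hS B hBB).mp hSBwin with h0 | ⟨hh, _⟩
      · exact absurd h0 hHS
      · exact hh
    have hST'lose : ¬ C.winning (S ∪ T') := by
      rw [cardw S hS T' hT']; omega
    have hKT' : ¬ K.winning T' := fun hk' =>
      hST'lose ((main S hS T' hT').mpr (Or.inr ⟨hHS', hk'⟩))
    obtain ⟨S'', hS'', hS''c⟩ :=
      Finset.exists_subset_card_eq (show k - B.card + 1 ≤ A.card by omega)
    have hXwin : C.winning (S'' ∪ T') := by
      rw [cardw S'' hS'' T' hT']; omega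
    rcases (main S'' hS'' T' hT').mp hXwin with hs' | ⟨_, hk'⟩
    · have := no_small S'' hS'' hs'; omega
    · exact hKT' hk'
end

section
/- Let G be a simple game and suppose G = H_{n1,k1}∘_{h1} G1 and G = H_{n2,k2}∘_{h2} G2 (equalities of player sets and of collections of winning coalitions), where for i = 1, 2: 1 ≤ k_i < n_i, h_i is a player of the k_i-out-of-n_i game H_{n_i,k_i}, and G_i is a simple game on a nonempty player set disjoint from that of H_{n_i,k_i} such that G_i has no passers. Then n1 = n2, k1 = k2, and G1 = G2 (same player set and same winning coalitions). Likewise, if G = U_{n1}∘_{h1} G1 and G = U_{n2}∘_{h2} G2 where G1 and G2 are simple games on nonempty player sets having no vetoers, then n1 = n2 and G1 = G2. -/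
open scoped Classical

/-!
In `C = H_{n,k} ∘_h K` every coalition splits as `S ∪ Y` with `S` among the players
`A = P_H \ {h}` and `Y` among those of `K`, and it wins iff `k ≤ |S|`, or `k ≤ |S| + 1` and `Y`
wins in `K`. The set `A` can be read off from `C` alone: for `k < n` and `K` without passers it
consists of the players that are at least as desirable as everybody, and for `k = n` and `K`
without vetoers it is the set of vetoers of `C`. This recovers `n = |A| + 1`; `k` is the least
size of a winning subset of `A`; `P_K = P_C \ A`; and `Y` wins in `K` iff `S ∪ Y` wins in `C`
for any `S ⊆ A` with `|S| = k - 1`.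
-/

open SimpleGame Finset

theorem eq_of_forall_subset_le_card_iff {α : Type} {A : Finset α} {k k' : ℕ}
    (hk : k ≤ #A) (hk' : k' ≤ #A) (h : ∀ S ⊆ A, k ≤ #S ↔ k' ≤ #S) : k = k' := by
  obtain ⟨S, hS, hSk⟩ := exists_subset_card_eq hk
  obtain ⟨S', hS', hS'k'⟩ := exists_subset_card_eq hk'
  have := (h S hS).1 hSk.ge
  have := (h S' hS').2 hS'k'.ge
  omega

namespace SimpleGame

variable {α : Type}

theorem winning_iff_of_players_eq {G G' : SimpleGame α} (hP : G.players = G'.players)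
    (h : ∀ X ⊆ G.players, G.winning X ↔ G'.winning X) (X : Finset α) :
    G.winning X ↔ G'.winning X := by
  by_cases hX : X ⊆ G.players
  · exact h X hX
  · exact iff_of_false (mt (G.winning_subset X) hX) (mt (G'.winning_subset X) (hP ▸ hX))

theorem not_winning_empty_of_forall_not_isPasser {G : SimpleGame α}
    (hG : ∀ p ∈ G.players, ¬ G.IsPasser p) : ¬ G.winning ∅ := fun hw =>
  let ⟨p, hp⟩ := G.players_nonempty
  hG p hp (G.winning_mono hw (empty_subset _) (singleton_subset_iff.2 hp))

/-- Unfolded form of `C = H_{n,k} ∘_h K` with `A = P_H \ {h}`; `n` enters only through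
`#A = n - 1`. -/
structure IsThresholdComposition (C K : SimpleGame α) (A : Finset α) (k : ℕ) : Prop where
  players_eq : C.players = A ∪ K.players
  disjoint : Disjoint A K.players
  winning_iff : ∀ X ⊆ C.players,
    C.winning X ↔ k ≤ #(X ∩ A) ∨ (k ≤ #(X ∩ A) + 1 ∧ K.winning (X ∩ K.players))

theorem IsComposition.isThresholdComposition {C H K : SimpleGame α} {h : α} {n k : ℕ}
    (hc : IsComposition C H K h) (hH : IsKOutOfN H n k) (hh : h ∈ H.players)
    (hdisj : Disjoint H.players K.players) :
    IsThresholdComposition C K (H.players.erase h) k where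
  players_eq := by rw [hc.1, erase_eq]
  disjoint := disjoint_of_subset_left (erase_subset _ _) hdisj
  winning_iff X hX := by
    have hhX : h ∉ X := fun hx => by
      have := hc.1 ▸ hX hx
      simp only [mem_union, mem_sdiff, mem_singleton, not_true, and_false, false_or] at this
      exact disjoint_left.1 hdisj hh this
    have hXH : X ∩ H.players = X ∩ H.players.erase h := by
      ext a
      simp only [mem_inter, mem_erase]
      exact ⟨fun ⟨haX, haH⟩ => ⟨haX, fun ha => hhX (ha ▸ haX), haH⟩,
        fun ⟨haX, _, haH⟩ => ⟨haX, haH⟩⟩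
    have hsub : X ∩ H.players.erase h ⊆ H.players := inter_subset_right.trans (erase_subset _ _)
    rw [hc.2 X hX, hXH, hH.2 _ hsub, hH.2 _ (insert_subset hh hsub),
      card_insert_of_notMem (by simp)]

namespace IsThresholdComposition

variable {C K : SimpleGame α} {A : Finset α} {k : ℕ}

theorem subset_players (hT : IsThresholdComposition C K A k) : A ⊆ C.players :=
  hT.players_eq ▸ subset_union_left

theorem players_eq_sdiff (hT : IsThresholdComposition C K A k) : K.players = C.players \ A := by
  rw [hT.players_eq, union_sdiff_cancel_left hT.disjoint]

theorem winning_union_iff (hT : IsThresholdComposition C K A k) {S Y : Finset α} (hS : S ⊆ A)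
    (hY : Y ⊆ K.players) :
    C.winning (S ∪ Y) ↔ k ≤ #S ∨ (k ≤ #S + 1 ∧ K.winning Y) := by
  have hSA : (S ∪ Y) ∩ A = S := by
    rw [union_inter_distrib_right, inter_eq_left.2 hS,
      disjoint_iff_inter_eq_empty.1 (disjoint_of_subset_left hY hT.disjoint.symm), union_empty]
  have hSK : (S ∪ Y) ∩ K.players = Y := by
    rw [union_inter_distrib_right, inter_eq_left.2 hY,
      disjoint_iff_inter_eq_empty.1 (disjoint_of_subset_left hS hT.disjoint), empty_union]
  rw [hT.winning_iff _ (hT.players_eq ▸ union_subset_union hS hY), hSA, hSK]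

theorem winning_iff_of_subset (hT : IsThresholdComposition C K A k) (hK : ¬ K.winning ∅)
    {S : Finset α} (hS : S ⊆ A) : C.winning S ↔ k ≤ #S := by
  simpa [hK] using hT.winning_union_iff hS (empty_subset _)

theorem winning_union_iff_of_card (hT : IsThresholdComposition C K A k) {S Y : Finset α}
    (hS : S ⊆ A) (hSk : #S + 1 = k) (hY : Y ⊆ K.players) :
    C.winning (S ∪ Y) ↔ K.winning Y := by
  simp only [hT.winning_union_iff hS hY, show ¬ k ≤ #S by omega, show k ≤ #S + 1 by omega,
    false_or, true_and]

theorem geq_of_mem (hT : IsThresholdComposition C K A k) {a : α} (ha : a ∈ A) (q : α) :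
    C.Geq a q := by
  intro X hX haX hqX hw
  rw [hT.winning_iff _ (C.winning_subset _ hw)] at hw
  rw [hT.winning_iff _ (insert_subset (hT.subset_players ha) hX), insert_inter_of_mem ha,
    card_insert_of_notMem (by simp [haX]),
    insert_inter_of_notMem (disjoint_left.1 hT.disjoint ha)]
  by_cases hqA : q ∈ A
  · rwa [insert_inter_of_mem hqA, card_insert_of_notMem (by simp [hqX]),
      insert_inter_of_notMem (disjoint_left.1 hT.disjoint hqA)] at hw
  · rw [insert_inter_of_notMem hqA] at hw
    omega

/-- Choosing `k - 1` players of `A` other than `a` shows that a player of `K` at least as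
desirable as `a` would be a passer of `K`. -/
theorem mem_of_geq (hT : IsThresholdComposition C K A k) (hk : 1 ≤ k) (hkA : k ≤ #A)
    (hK : ∀ p ∈ K.players, ¬ K.IsPasser p) {a p : α} (ha : a ∈ A) (hp : p ∈ C.players)
    (hpa : C.Geq p a) : p ∈ A := by
  by_contra hpA
  have hpK : p ∈ K.players := by
    simpa [hT.players_eq, hpA] using hp
  obtain ⟨S, hS, hSk⟩ := exists_subset_card_eq (s := A.erase a) (n := k - 1)
    (by rw [card_erase_of_mem ha]; omega)
  have hSA : S ⊆ A := hS.trans (erase_subset _ _)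
  have haS : a ∉ S := fun h => notMem_erase a A (hS h)
  have hpS : p ∉ S := fun h => hpA (hSA h)
  have hwa : C.winning (insert a S) := by
    rw [hT.winning_iff_of_subset (not_winning_empty_of_forall_not_isPasser hK)
        (insert_subset ha hSA),
      card_insert_of_notMem haS]
    omega
  have hwp : C.winning (S ∪ {p}) := by
    rw [union_comm, ← insert_eq]
    exact hpa S (hSA.trans hT.subset_players) hpS haS hwa
  rw [hT.winning_union_iff_of_card hSA (by omega) (singleton_subset_iff.2 hpK)] at hwp
  exact hK p hpK hwp

theorem eq_filter_geq (hT : IsThresholdComposition C K A k) (hk : 1 ≤ k) (hkA : k ≤ #A)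
    (hK : ∀ p ∈ K.players, ¬ K.IsPasser p) :
    A = C.players.filter (fun p => ∀ q ∈ C.players, C.Geq p q) := by
  obtain ⟨a, ha⟩ : A.Nonempty := card_pos.1 (by omega)
  ext p
  refine ⟨fun hp => mem_filter.2 ⟨hT.subset_players hp, fun q _ => hT.geq_of_mem hp q⟩,
    fun hp => ?_⟩
  obtain ⟨hpC, hpmax⟩ := mem_filter.1 hp
  exact hT.mem_of_geq hk hkA hK ha hpC (hpmax a (hT.subset_players ha))

theorem eq_filter_isVetoer (hT : IsThresholdComposition C K A k) (hkA : #A + 1 = k)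
    (hK : ∀ p ∈ K.players, ¬ K.IsVetoer p) : A = C.players.filter C.IsVetoer := by
  ext p
  refine ⟨fun hp => mem_filter.2 ⟨hT.subset_players hp, fun X hw => ?_⟩, fun hp => ?_⟩
  · rw [hT.winning_iff X (C.winning_subset X hw)] at hw
    have hXA : #A ≤ #(X ∩ A) := by omega
    exact inter_subset_left (eq_of_subset_of_card_le inter_subset_right hXA ▸ hp)
  · obtain ⟨hpC, hpv⟩ := mem_filter.1 hp
    by_contra hpA
    have hpK : p ∈ K.players := by
      simpa [hT.players_eq, hpA] using hpC
    obtain ⟨Y, hY, hpY⟩ : ∃ Y, K.winning Y ∧ p ∉ Y := by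
      simpa [IsVetoer] using hK p hpK
    have hw := (hT.winning_union_iff_of_card subset_rfl hkA (K.winning_subset Y hY)).2 hY
    simpa [hpA, hpY] using hpv _ hw

theorem right_unique {K' : SimpleGame α} (hT : IsThresholdComposition C K A k)
    (hT' : IsThresholdComposition C K' A k) (hk : 1 ≤ k) (hkA : k ≤ #A + 1) :
    K.players = K'.players ∧ ∀ X, K.winning X ↔ K'.winning X := by
  have hP : K.players = K'.players := by rw [hT.players_eq_sdiff, hT'.players_eq_sdiff]
  obtain ⟨S, hS, hSk⟩ := exists_subset_card_eq (s := A) (n := k - 1) (by omega)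
  refine ⟨hP, winning_iff_of_players_eq hP fun X hX => ?_⟩
  rw [← hT.winning_union_iff_of_card hS (by omega) hX,
    hT'.winning_union_iff_of_card hS (by omega) (hP ▸ hX)]

end IsThresholdComposition

theorem kOutOfN_composition_unique {G H1 G1 H2 G2 : SimpleGame α} {n1 k1 n2 k2 : ℕ}
    {h1 h2 : α} (hk1 : 1 ≤ k1) (hkn1 : k1 < n1) (hk2 : 1 ≤ k2) (hkn2 : k2 < n2)
    (hH1 : IsKOutOfN H1 n1 k1) (hH2 : IsKOutOfN H2 n2 k2)
    (hh1 : h1 ∈ H1.players) (hh2 : h2 ∈ H2.players)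
    (hd1 : Disjoint H1.players G1.players) (hd2 : Disjoint H2.players G2.players)
    (hp1 : ∀ p ∈ G1.players, ¬ G1.IsPasser p) (hp2 : ∀ p ∈ G2.players, ¬ G2.IsPasser p)
    (hc1 : IsComposition G H1 G1 h1) (hc2 : IsComposition G H2 G2 h2) :
    n1 = n2 ∧ k1 = k2 ∧ G1.players = G2.players ∧ ∀ X, G1.winning X ↔ G2.winning X := by
  have hT1 := hc1.isThresholdComposition hH1 hh1 hd1
  have hT2 := hc2.isThresholdComposition hH2 hh2 hd2
  have hA1 : #(H1.players.erase h1) + 1 = n1 := by rw [card_erase_add_one hh1, hH1.1]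
  have hA2 : #(H2.players.erase h2) + 1 = n2 := by rw [card_erase_add_one hh2, hH2.1]
  have hA : H1.players.erase h1 = H2.players.erase h2 := by
    rw [hT1.eq_filter_geq hk1 (by omega) hp1, hT2.eq_filter_geq hk2 (by omega) hp2]
  rw [hA] at hT1 hA1
  have hk : k1 = k2 :=
    eq_of_forall_subset_le_card_iff (A := H2.players.erase h2) (by omega) (by omega) fun S hS => by
      rw [← hT1.winning_iff_of_subset (not_winning_empty_of_forall_not_isPasser hp1) hS,
        hT2.winning_iff_of_subset (not_winning_empty_of_forall_not_isPasser hp2) hS]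
  subst hk
  exact ⟨by omega, rfl, hT1.right_unique hT2 hk1 (by omega)⟩

theorem unanimity_composition_unique {G U1 G1 U2 G2 : SimpleGame α} {n1 n2 : ℕ} {h1 h2 : α}
    (hU1 : IsKOutOfN U1 n1 n1) (hU2 : IsKOutOfN U2 n2 n2)
    (hh1 : h1 ∈ U1.players) (hh2 : h2 ∈ U2.players)
    (hd1 : Disjoint U1.players G1.players) (hd2 : Disjoint U2.players G2.players)
    (hv1 : ∀ p ∈ G1.players, ¬ G1.IsVetoer p) (hv2 : ∀ p ∈ G2.players, ¬ G2.IsVetoer p)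
    (hc1 : IsComposition G U1 G1 h1) (hc2 : IsComposition G U2 G2 h2) :
    n1 = n2 ∧ G1.players = G2.players ∧ ∀ X, G1.winning X ↔ G2.winning X := by
  have hT1 := hc1.isThresholdComposition hU1 hh1 hd1
  have hT2 := hc2.isThresholdComposition hU2 hh2 hd2
  have hA1 : #(U1.players.erase h1) + 1 = n1 := by rw [card_erase_add_one hh1, hU1.1]
  have hA2 : #(U2.players.erase h2) + 1 = n2 := by rw [card_erase_add_one hh2, hU2.1]
  have hA : U1.players.erase h1 = U2.players.erase h2 := by
    rw [hT1.eq_filter_isVetoer hA1 hv1, hT2.eq_filter_isVetoer hA2 hv2]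
  rw [hA] at hT1 hA1
  have hn : n1 = n2 := by omega
  subst hn
  exact ⟨rfl, hT1.right_unique hT2 (by omega) hA1.ge⟩

end SimpleGame

/-- uniqueness of decompositions whose first component is a
`k`-out-of-`n` game (second component with no passers), and whose first
component is a unanimity game (second component with no vetoers). -/
theorem statement10 {α : Type} :
    (∀ (G H1 G1 H2 G2 : SimpleGame α) (n1 k1 n2 k2 : ℕ) (h1 h2 : α),
      1 ≤ k1 → k1 < n1 → 1 ≤ k2 → k2 < n2 →
      SimpleGame.IsKOutOfN H1 n1 k1 → SimpleGame.IsKOutOfN H2 n2 k2 →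
      h1 ∈ H1.players → h2 ∈ H2.players →
      Disjoint H1.players G1.players → Disjoint H2.players G2.players →
      (∀ p ∈ G1.players, ¬ G1.IsPasser p) →
      (∀ p ∈ G2.players, ¬ G2.IsPasser p) →
      SimpleGame.IsComposition G H1 G1 h1 →
      SimpleGame.IsComposition G H2 G2 h2 →
      (n1 = n2 ∧ k1 = k2 ∧ G1.players = G2.players ∧
        ∀ X : Finset α, (G1.winning X ↔ G2.winning X))) ∧
    (∀ (G U1 G1 U2 G2 : SimpleGame α) (n1 n2 : ℕ) (h1 h2 : α),
      1 ≤ n1 → 1 ≤ n2 →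
      SimpleGame.IsKOutOfN U1 n1 n1 → SimpleGame.IsKOutOfN U2 n2 n2 →
      h1 ∈ U1.players → h2 ∈ U2.players →
      Disjoint U1.players G1.players → Disjoint U2.players G2.players →
      (∀ p ∈ G1.players, ¬ G1.IsVetoer p) →
      (∀ p ∈ G2.players, ¬ G2.IsVetoer p) →
      SimpleGame.IsComposition G U1 G1 h1 →
      SimpleGame.IsComposition G U2 G2 h2 →
      (n1 = n2 ∧ G1.players = G2.players ∧
        ∀ X : Finset α, (G1.winning X ↔ G2.winning X))) :=
  ⟨fun _ _ _ _ _ _ _ _ _ _ _ => kOutOfN_composition_unique,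
    fun _ _ _ _ _ _ _ _ _ _ _ => unanimity_composition_unique⟩
end

section
/- Let n1 and k1 be integers with 1 ≤ k1 < n1. The game of type B1 with parameters (n1, 2, k1, k1+1) — i.e. the simple game on P = P1 ⊔ P2 with |P1| = n1, |P2| = 2, in which X is winning iff |X∩P1| ≥ k1 and |X| ≥ k1+1 — is isomorphic to the composition H_{n1+1, k1+1}∘_h A_2 for any player h of H_{n1+1,k1+1}; in particular, this game is decomposable. -/
open scoped Classical

open SimpleGame
/-- the game of type B1 with parameters `(n1, 2, k1, k1+1)` is
isomorphic to `H_{n1+1,k1+1} ∘_h A_2` for any player `h`; in particular it is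
decomposable. -/
theorem statement11 {α β : Type} (n1 k1 : ℕ) (hk : 1 ≤ k1) (hkn : k1 < n1)
    (G : SimpleGame α) (P1 P2 : Finset α)
    (hP : Disjoint P1 P2) (hplayers : G.players = P1 ∪ P2)
    (hP1 : P1.card = n1) (hP2 : P2.card = 2)
    (hwin : ∀ X ⊆ G.players,
      (G.winning X ↔ (k1 ≤ (X ∩ P1).card ∧ k1 + 1 ≤ X.card)))
    (H A C : SimpleGame β) (h : β)
    (hH : SimpleGame.IsKOutOfN H (n1 + 1) (k1 + 1))
    (hA : SimpleGame.IsKOutOfN A 2 1)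
    (hdisj : Disjoint H.players A.players)
    (hh : h ∈ H.players)
    (hC : SimpleGame.IsComposition C H A h) :
    G.Isomorphic C ∧ G.Decomposable := by
  classical
  obtain ⟨hHcard, hHwin⟩ := hH
  obtain ⟨hAcard, hAwin⟩ := hA
  obtain ⟨hCplayers, hCwin⟩ := hC
  have hhA : h ∉ A.players := Finset.disjoint_left.mp hdisj hh
  have hP1card : P1.card = (H.players \ {h}).card := by
    rw [Finset.card_sdiff_of_subset (Finset.singleton_subset_iff.mpr hh), hHcard,
      Finset.card_singleton, hP1]
    omega
  have hP2card : P2.card = A.players.card := by rw [hP2, hAcard]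
  let e1 := Finset.equivOfCardEq hP1card
  let e2 := Finset.equivOfCardEq hP2card
  let σ : α → β := fun a =>
    if h1 : a ∈ P1 then (e1 ⟨a, h1⟩ : β)
    else if h2 : a ∈ P2 then (e2 ⟨a, h2⟩ : β) else h
  have hσ1 : ∀ a (ha : a ∈ P1), σ a = (e1 ⟨a, ha⟩ : β) := by
    intro a ha; simp [σ, ha]
  have hσ2 : ∀ a (ha : a ∈ P2), σ a = (e2 ⟨a, ha⟩ : β) := by
    intro a ha
    have h1 : a ∉ P1 := Finset.disjoint_right.mp hP ha
    simp [σ, h1, ha]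
  have hmem1 : ∀ a ∈ P1, σ a ∈ H.players \ {h} := by
    intro a ha; rw [hσ1 a ha]; exact (e1 ⟨a, ha⟩).2
  have hmem2 : ∀ a ∈ P2, σ a ∈ A.players := by
    intro a ha; rw [hσ2 a ha]; exact (e2 ⟨a, ha⟩).2
  have hinj : Set.InjOn σ ↑(P1 ∪ P2) := by
    intro a ha b hb hab
    simp only [Finset.coe_union, Set.mem_union, Finset.mem_coe] at ha hb
    rcases ha with ha | ha <;> rcases hb with hb | hb
    · rw [hσ1 a ha, hσ1 b hb] at hab
      exact congrArg Subtype.val (e1.injective (Subtype.coe_injective hab))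
    · exfalso
      have h1 := hmem1 a ha
      have h2 := hmem2 b hb
      rw [hab] at h1
      exact Finset.disjoint_left.mp hdisj (Finset.mem_sdiff.mp h1).1 h2
    · exfalso
      have h1 := hmem1 b hb
      have h2 := hmem2 a ha
      rw [← hab] at h1
      exact Finset.disjoint_left.mp hdisj (Finset.mem_sdiff.mp h1).1 h2
    · rw [hσ2 a ha, hσ2 b hb] at hab
      exact congrArg Subtype.val (e2.injective (Subtype.coe_injective hab))
  have himg1 : P1.image σ = H.players \ {h} := by
    apply Finset.Subset.antisymm
    · intro b hb
      obtain ⟨a, ha, rfl⟩ := Finset.mem_image.mp hb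
      exact hmem1 a ha
    · intro b hb
      refine Finset.mem_image.mpr ⟨(e1.symm ⟨b, hb⟩ : α), (e1.symm ⟨b, hb⟩).2, ?_⟩
      rw [hσ1 _ (e1.symm ⟨b, hb⟩).2]
      exact congrArg Subtype.val (e1.apply_symm_apply ⟨b, hb⟩)
  have himg2 : P2.image σ = A.players := by
    apply Finset.Subset.antisymm
    · intro b hb
      obtain ⟨a, ha, rfl⟩ := Finset.mem_image.mp hb
      exact hmem2 a ha
    · intro b hb
      refine Finset.mem_image.mpr ⟨(e2.symm ⟨b, hb⟩ : α), (e2.symm ⟨b, hb⟩).2, ?_⟩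
      rw [hσ2 _ (e2.symm ⟨b, hb⟩).2]
      exact congrArg Subtype.val (e2.apply_symm_apply ⟨b, hb⟩)
  have hiso : G.Isomorphic C := by
    refine ⟨σ, ?_, ?_, ?_⟩
    · rw [hplayers]; exact hinj
    · rw [hplayers, Finset.image_union, himg1, himg2, hCplayers]
    · intro X hXG
      have hX : X ⊆ P1 ∪ P2 := by rw [← hplayers]; exact hXG
      set Y := X.image σ with hY
      have hXsplit : X = (X ∩ P1) ∪ (X ∩ P2) := by
        rw [← Finset.inter_union_distrib_left]
        exact (Finset.inter_eq_left.mpr hX).symm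
      have hYu : Y = ((X ∩ P1).image σ) ∪ ((X ∩ P2).image σ) := by
        conv_lhs => rw [hY, hXsplit]
        rw [Finset.image_union]
      have hs1 : (X ∩ P1).image σ ⊆ H.players \ {h} := by
        intro b hb
        obtain ⟨a, ha, rfl⟩ := Finset.mem_image.mp hb
        exact hmem1 a (Finset.mem_inter.mp ha).2
      have hs2 : (X ∩ P2).image σ ⊆ A.players := by
        intro b hb
        obtain ⟨a, ha, rfl⟩ := Finset.mem_image.mp hb
        exact hmem2 a (Finset.mem_inter.mp ha).2
      have hYH : Y ∩ H.players = (X ∩ P1).image σ := by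
        rw [hYu, Finset.union_inter_distrib_right,
          Finset.inter_eq_left.mpr (hs1.trans Finset.sdiff_subset),
          Finset.disjoint_iff_inter_eq_empty.mp (hdisj.symm.mono_left hs2),
          Finset.union_empty]
      have hYA : Y ∩ A.players = (X ∩ P2).image σ := by
        have hd1 : Disjoint ((X ∩ P1).image σ) A.players :=
          hdisj.mono_left (hs1.trans Finset.sdiff_subset)
        rw [hYu, Finset.union_inter_distrib_right,
          Finset.inter_eq_left.mpr hs2,
          Finset.disjoint_iff_inter_eq_empty.mp hd1, Finset.empty_union]
      have hc1 : ((X ∩ P1).image σ).card = (X ∩ P1).card :=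
        Finset.card_image_of_injOn (hinj.mono (by
          intro a ha
          simp only [Finset.coe_inter, Set.mem_inter_iff, Finset.mem_coe,
            Finset.coe_union, Set.mem_union] at ha ⊢
          exact Or.inl ha.2))
      have hc2 : ((X ∩ P2).image σ).card = (X ∩ P2).card :=
        Finset.card_image_of_injOn (hinj.mono (by
          intro a ha
          simp only [Finset.coe_inter, Set.mem_inter_iff, Finset.mem_coe,
            Finset.coe_union, Set.mem_union] at ha ⊢
          exact Or.inr ha.2))
      have hhY : h ∉ Y ∩ H.players := by
        rw [hYH]
        intro hmem
        exact (Finset.mem_sdiff.mp (hs1 hmem)).2 (Finset.mem_singleton_self h)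
      have hinsc : (insert h (Y ∩ H.players)).card = (X ∩ P1).card + 1 := by
        rw [Finset.card_insert_of_notMem hhY, hYH, hc1]
      have hYC : Y ⊆ C.players := by
        rw [hYu, hCplayers]
        exact Finset.union_subset (hs1.trans Finset.subset_union_left)
          (hs2.trans Finset.subset_union_right)
      have hXcard : X.card = (X ∩ P1).card + (X ∩ P2).card := by
        conv_lhs => rw [hXsplit]
        exact Finset.card_union_of_disjoint
          (hP.mono Finset.inter_subset_right Finset.inter_subset_right)
      rw [hwin X hXG, hCwin Y hYC,
        hHwin _ Finset.inter_subset_right,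
        hHwin _ (Finset.insert_subset hh Finset.inter_subset_right),
        hAwin _ Finset.inter_subset_right,
        hinsc, hYH, hYA, hc1, hc2, hXcard]
      omega
  refine ⟨hiso, β, H, A, C, h, hdisj, hh, ?_, ?_, ⟨hCplayers, hCwin⟩, hiso⟩
  · rw [hHcard]; omega
  · rw [hAcard]
end

section
/- Let G be a game of type B2 with parameters (n1, n2, k1), let g ∈ P2 be a player of level 2 of G, and let n ≥ 1 be an integer, with A_n defined on a player set disjoint from that of G. Then the composition G∘_g A_n is a weighted game. -/
open scoped Classical

open SimpleGame

lemma key (k1 n p m t : ℕ) (hk1 : 1 < k1) (hn : 1 ≤ n) (hpm : p ≤ m) (htn : t ≤ n) :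
    ((k1 ≤ p ∨ k1 + 1 ≤ m) ∨ ((k1 ≤ p ∨ k1 + 1 ≤ m + 1) ∧ 1 ≤ t)) ↔
      2*n*k1*k1 + k1 ≤ 2*n*k1*m + p + k1*t := by
  have hkm : k1 ≤ 2*n*k1 := by
    calc k1 = 1 * k1 := (one_mul k1).symm
    _ ≤ 2*n*k1 := Nat.mul_le_mul_right k1 (by omega)
  constructor
  · rintro ((h | h) | ⟨(h | h), ht⟩)
    · have hm : 2*n*k1*k1 ≤ 2*n*k1*m := Nat.mul_le_mul_left _ (h.trans hpm)
      linarith [Nat.zero_le (k1*t)]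
    · have hm : 2*n*k1*(k1+1) ≤ 2*n*k1*m := Nat.mul_le_mul_left _ h
      have h2 : 2*n*k1*k1 + 2*n*k1 ≤ 2*n*k1*m := by
        linarith [(by ring : 2*n*k1*(k1+1) = 2*n*k1*k1 + 2*n*k1)]
      linarith [Nat.zero_le (k1*t), Nat.zero_le p]
    · have hm : 2*n*k1*k1 ≤ 2*n*k1*m := Nat.mul_le_mul_left _ (h.trans hpm)
      linarith [Nat.zero_le (k1*t)]
    · have hm : 2*n*k1*k1 ≤ 2*n*k1*m := Nat.mul_le_mul_left _ (by omega)
      have hkt : k1*1 ≤ k1*t := Nat.mul_le_mul_left _ ht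
      linarith [Nat.zero_le p]
  · intro h
    by_contra hc
    push_neg at hc
    obtain ⟨⟨h1, h2⟩, h3⟩ := hc
    rcases Nat.eq_zero_or_pos t with ht | ht
    · subst ht
      have hm : 2*n*k1*m ≤ 2*n*k1*k1 := Nat.mul_le_mul_left _ (by omega)
      simp only [Nat.mul_zero] at h
      linarith
    · have hmk : m + 1 ≤ k1 := by
        by_contra hmk'
        push_neg at hmk'
        have := h3 (Or.inr (by omega))
        omega
      have hm : 2*n*k1*(m+1) ≤ 2*n*k1*k1 := Nat.mul_le_mul_left _ hmk
      have hm' : 2*n*k1*m + 2*n*k1 ≤ 2*n*k1*k1 := by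
        linarith [(by ring : 2*n*k1*(m+1) = 2*n*k1*m + 2*n*k1)]
      have hkt : k1*t ≤ k1*n := Nat.mul_le_mul_left _ htn
      have hnk : k1*n ≤ 2*n*k1 := by
        calc k1*n = 1*(n*k1) := by ring
        _ ≤ 2*(n*k1) := Nat.mul_le_mul_right _ (by omega)
        _ = 2*n*k1 := by ring
      linarith


lemma sum_aux {α : Type} (X P A : Finset α) (a b c : ℕ) (hPA : ∀ i, i ∈ A → i ∉ P) :
    ∑ i ∈ X, (if i ∈ P then a else if i ∈ A then b else c)
      = (X ∩ P).card * a + (X ∩ A).card * b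
        + (X.card - (X ∩ P).card - (X ∩ A).card) * c := by
  classical
  have e1 : X.filter (fun i => i ∈ P) = X ∩ P := by
    ext i; simp [Finset.mem_filter, Finset.mem_inter]
  have e2 : (X.filter (fun i => ¬ i ∈ P)).filter (fun i => i ∈ A) = X ∩ A := by
    ext i
    simp only [Finset.mem_filter, Finset.mem_inter]
    constructor
    · rintro ⟨⟨h1, _⟩, h2⟩; exact ⟨h1, h2⟩
    · rintro ⟨h1, h2⟩; exact ⟨⟨h1, hPA i h2⟩, h2⟩
  have h1 := Finset.card_filter_add_card_filter_not (s := X) (p := fun i => i ∈ P)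
  have h2 := Finset.card_filter_add_card_filter_not
    (s := X.filter (fun i => ¬ i ∈ P)) (p := fun i => i ∈ A)
  rw [← Finset.sum_filter_add_sum_filter_not X (fun i => i ∈ P),
    ← Finset.sum_filter_add_sum_filter_not (X.filter (fun i => ¬ i ∈ P)) (fun i => i ∈ A)]
  have s1 : ∑ i ∈ X.filter (fun i => i ∈ P), (if i ∈ P then a else if i ∈ A then b else c)
      = (X ∩ P).card * a := by
    have hcg : ∀ i ∈ X.filter (fun i => i ∈ P),
        (if i ∈ P then a else if i ∈ A then b else c) = a := fun i hi => by
      simp [(Finset.mem_filter.mp hi).2]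
    rw [Finset.sum_congr rfl hcg, Finset.sum_const, e1, smul_eq_mul]
  have s2 : ∑ i ∈ (X.filter (fun i => ¬ i ∈ P)).filter (fun i => i ∈ A),
      (if i ∈ P then a else if i ∈ A then b else c) = (X ∩ A).card * b := by
    have hcg : ∀ i ∈ (X.filter (fun i => ¬ i ∈ P)).filter (fun i => i ∈ A),
        (if i ∈ P then a else if i ∈ A then b else c) = b := fun i hi => by
      have h := Finset.mem_filter.mp hi
      have h' := Finset.mem_filter.mp h.1
      simp [h'.2, h.2]
    rw [Finset.sum_congr rfl hcg, Finset.sum_const, e2, smul_eq_mul]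
  have s3 : ∑ i ∈ (X.filter (fun i => ¬ i ∈ P)).filter (fun i => ¬ i ∈ A),
      (if i ∈ P then a else if i ∈ A then b else c)
      = (X.card - (X ∩ P).card - (X ∩ A).card) * c := by
    have hcg : ∀ i ∈ (X.filter (fun i => ¬ i ∈ P)).filter (fun i => ¬ i ∈ A),
        (if i ∈ P then a else if i ∈ A then b else c) = c := fun i hi => by
      have h := Finset.mem_filter.mp hi
      have h' := Finset.mem_filter.mp h.1
      simp [h'.2, h.2]
    rw [Finset.sum_congr rfl hcg, Finset.sum_const, smul_eq_mul]
    congr 1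
    rw [e1] at h1
    rw [e2] at h2
    omega
  rw [s1, s2, s3]
  ring

/-- the composition of a game of type B2 with the anti-unanimity
game `A_n` over a player of level 2 is weighted. -/
theorem statement14 {α : Type} (n1 n2 k1 n : ℕ)
    (G : SimpleGame α) (P1 P2 : Finset α)
    (hP : Disjoint P1 P2) (hplayers : G.players = P1 ∪ P2)
    (hP1 : P1.card = n1) (hP2 : P2.card = n2)
    (hk1 : 1 < k1) (hk1n1 : k1 ≤ n1) (hk2n2 : k1 + 1 ≤ n2)
    (hwin : ∀ X ⊆ G.players,
      (G.winning X ↔ (k1 ≤ (X ∩ P1).card ∨ k1 + 1 ≤ X.card)))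
    (g : α) (hg : g ∈ P2)
    (A C : SimpleGame α) (hn : 1 ≤ n)
    (hA : SimpleGame.IsKOutOfN A n 1)
    (hdisj : Disjoint G.players A.players)
    (hC : SimpleGame.IsComposition C G A g) :
    C.Weighted := by
  classical
  obtain ⟨hCp, hCw⟩ := hC
  obtain ⟨hAcard, hAwin⟩ := hA
  have hP1G : P1 ⊆ G.players := by rw [hplayers]; exact Finset.subset_union_left
  have hgG : g ∈ G.players := by rw [hplayers]; exact Finset.mem_union_right _ hg
  have hgA : g ∉ A.players := fun h => Finset.disjoint_left.mp hdisj hgG h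
  have hgP1 : g ∉ P1 := fun h => Finset.disjoint_left.mp hP h hg
  have hP1A : ∀ i, i ∈ A.players → i ∉ P1 := fun i hi hip =>
    Finset.disjoint_left.mp hdisj (hP1G hip) hi
  refine ⟨fun i => ((if i ∈ P1 then 2*n*k1+1 else if i ∈ A.players then k1 else 2*n*k1 : ℕ) : ℝ),
    ((2*n*k1*k1 + k1 : ℕ) : ℝ), fun i => Nat.cast_nonneg _, ?_⟩
  intro X hX
  have hnatsum := sum_aux X P1 A.players (2*n*k1+1) k1 (2*n*k1) hP1A
  have hXsub : X ⊆ G.players ∪ A.players := by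
    refine hX.trans ?_
    rw [hCp]
    exact Finset.union_subset_union Finset.sdiff_subset (Finset.Subset.refl _)
  have hXeq : (X ∩ G.players) ∪ (X ∩ A.players) = X := by
    rw [← Finset.inter_union_distrib_left]
    exact Finset.inter_eq_left.mpr hXsub
  have hdisj2 : Disjoint (X ∩ G.players) (X ∩ A.players) :=
    hdisj.mono Finset.inter_subset_right Finset.inter_subset_right
  have hc : X.card = (X ∩ G.players).card + (X ∩ A.players).card := by
    have h := Finset.card_union_of_disjoint hdisj2
    rw [hXeq] at h
    omega
  have hgX : g ∉ X := by
    intro hgX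
    have hmem := hX hgX
    rw [hCp] at hmem
    rcases Finset.mem_union.mp hmem with h | h
    · exact (Finset.mem_sdiff.mp h).2 (Finset.mem_singleton_self g)
    · exact hgA h
  have hinterP1 : (X ∩ G.players) ∩ P1 = X ∩ P1 := by
    rw [Finset.inter_assoc, Finset.inter_eq_right.mpr hP1G]
  have hgXG : g ∉ X ∩ G.players := fun h => hgX (Finset.mem_inter.mp h).1
  have hcard_ins : (insert g (X ∩ G.players)).card = (X ∩ G.players).card + 1 :=
    Finset.card_insert_of_notMem hgXG
  have hins_P1 : insert g (X ∩ G.players) ∩ P1 = X ∩ P1 := by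
    rw [Finset.insert_inter_of_notMem hgP1, hinterP1]
  have hpm : (X ∩ P1).card ≤ (X ∩ G.players).card :=
    Finset.card_le_card (Finset.inter_subset_inter (Finset.Subset.refl X) hP1G)
  have htn : (X ∩ A.players).card ≤ n :=
    hAcard ▸ Finset.card_le_card Finset.inter_subset_right
  have harith : (X ∩ P1).card * (2*n*k1+1) + (X ∩ A.players).card * k1
      + (X.card - (X ∩ P1).card - (X ∩ A.players).card) * (2*n*k1)
      = 2*n*k1*(X ∩ G.players).card + (X ∩ P1).card + k1*(X ∩ A.players).card := by
    obtain ⟨d, hd⟩ : ∃ d, (X ∩ G.players).card = (X ∩ P1).card + d :=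
      ⟨(X ∩ G.players).card - (X ∩ P1).card, by omega⟩
    have h3 : X.card - (X ∩ P1).card - (X ∩ A.players).card = d := by omega
    rw [h3, hd]; ring
  rw [hCw X hX, hwin _ Finset.inter_subset_right,
    hwin _ (Finset.insert_subset hgG Finset.inter_subset_right),
    hAwin _ Finset.inter_subset_right, hinterP1, hins_P1, hcard_ins,
    ← Nat.cast_sum, hnatsum, Nat.cast_le, harith]
  exact key k1 n (X ∩ P1).card (X ∩ G.players).card (X ∩ A.players).card hk1 hn hpm htn
end

section
/- Let G be a simple game and g ∈ P_G, and suppose there exist coalitions X1, X2 ⊆ P_G∖{g} and Y1, Y2 ⊆ P_G such that (X1, X2; Y1, Y2) is a trading transform, X1 is winning in G, X2∪{g} is winning in G, and Y1 and Y2 are losing in G. Let H be a simple game on a player set disjoint from P_G that has a minimal winning coalition with at least two players. Then the composition G∘_g H is not weighted. -/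
open scoped Classical

open SimpleGame
/-- if `G` admits a trading transform `(X1, X2; Y1, Y2)` with `X1`
winning, `X2` `g`-winning, `Y1, Y2` losing, and `H` has a minimal winning
coalition with at least two players, then `G ∘_g H` is not weighted. -/
theorem statement15 {α : Type} (G H C : SimpleGame α) (g : α)
    (hg : g ∈ G.players)
    (X1 X2 Y1 Y2 : Finset α)
    (hX1 : X1 ⊆ G.players \ {g}) (hX2 : X2 ⊆ G.players \ {g})
    (hY1 : Y1 ⊆ G.players) (hY2 : Y2 ⊆ G.players)
    (htt : SimpleGame.IsTradingTransform2 X1 X2 Y1 Y2)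
    (hwX1 : G.winning X1) (hwX2 : G.winning (insert g X2))
    (hlY1 : ¬ G.winning Y1) (hlY2 : ¬ G.winning Y2)
    (hdisj : Disjoint G.players H.players)
    (hU : ∃ U : Finset α, H.MinWinning U ∧ 2 ≤ U.card)
    (hC : SimpleGame.IsComposition C G H g) :
    ¬ C.Weighted := by
  rintro ⟨w, q, hwpos, hq⟩
  obtain ⟨U, ⟨hUw, hUmin⟩, hUcard⟩ := hU
  have hUP : U ⊆ H.players := H.winning_subset U hUw
  obtain ⟨u, hu⟩ : U.Nonempty := Finset.card_pos.mp (by omega)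
  have hX1G : X1 ⊆ G.players := hX1.trans Finset.sdiff_subset
  have hX2G : X2 ⊆ G.players := hX2.trans Finset.sdiff_subset
  have hgX1 : g ∉ X1 := fun h => by simpa using (hX1 h)
  have hgX2 : g ∉ X2 := fun h => by simpa using (hX2 h)
  have hd : ∀ {a}, a ∈ G.players → a ∉ H.players := fun h => Finset.disjoint_left.mp hdisj h
  have hd' : ∀ {a}, a ∈ H.players → a ∉ G.players := fun h => Finset.disjoint_right.mp hdisj h
  have hgY1 : g ∉ Y1 := by
    intro hh; have h := htt g
    rw [if_neg hgX1, if_neg hgX2, if_pos hh] at h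
    split_ifs at h <;> omega
  have hgY2 : g ∉ Y2 := by
    intro hh; have h := htt g
    rw [if_neg hgX1, if_neg hgX2, if_pos hh] at h
    split_ifs at h <;> omega
  -- intersection helpers
  have hGint : ∀ Z V : Finset α, Z ⊆ G.players → V ⊆ H.players →
      (Z ∪ V) ∩ G.players = Z := by
    intro Z V hZ hV
    ext a
    simp only [Finset.mem_inter, Finset.mem_union]
    constructor
    · rintro ⟨h1 | h1, h2⟩
      · exact h1
      · exact absurd (hV h1) (hd h2)
    · intro h; exact ⟨Or.inl h, hZ h⟩
  have hHint : ∀ Z V : Finset α, Z ⊆ G.players → V ⊆ H.players →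
      (Z ∪ V) ∩ H.players = V := by
    intro Z V hZ hV
    ext a
    simp only [Finset.mem_inter, Finset.mem_union]
    constructor
    · rintro ⟨h1 | h1, h2⟩
      · exact absurd (hZ h1) (hd' h2)
      · exact h1
    · intro h; exact ⟨Or.inr h, hV h⟩
  -- the four coalitions of C
  have huH : ({u} : Finset α) ⊆ H.players := Finset.singleton_subset_iff.mpr (hUP hu)
  have herU : U.erase u ⊆ H.players := (Finset.erase_subset _ _).trans hUP
  obtain ⟨hCP, hCW⟩ := hC
  have hsub : ∀ Z V : Finset α, Z ⊆ G.players → g ∉ Z → V ⊆ H.players →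
      Z ∪ V ⊆ C.players := by
    intro Z V hZ hgZ hV
    rw [hCP]
    intro a ha
    rcases Finset.mem_union.mp ha with h | h
    · exact Finset.mem_union_left _ (Finset.mem_sdiff.mpr ⟨hZ h, by
        simp only [Finset.mem_singleton]; rintro rfl; exact hgZ h⟩)
    · exact Finset.mem_union_right _ (hV h)
  have hX1eq : X1 ∪ (∅ : Finset α) = X1 := Finset.union_empty X1
  -- losing subcoalitions in H
  have hlu : ¬ H.winning {u} := hUmin _ (Finset.ssubset_iff_subset_ne.mpr
    ⟨Finset.singleton_subset_iff.mpr hu, fun h => by rw [← h] at hUcard; simp at hUcard⟩)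
  have hler : ¬ H.winning (U.erase u) := hUmin _ (Finset.erase_ssubset hu)
  -- winning in C
  have hwA1 : C.winning X1 := by
    refine (hCW X1 (by rw [← hX1eq]; exact hsub X1 ∅ hX1G hgX1 (Finset.empty_subset _))).mpr ?_
    exact Or.inl (by rw [Finset.inter_eq_left.mpr hX1G]; exact hwX1)
  have hwA2 : C.winning (X2 ∪ U) := by
    refine (hCW _ (hsub X2 U hX2G hgX2 hUP)).mpr ?_
    exact Or.inr ⟨by rw [hGint X2 U hX2G hUP]; exact hwX2,
      by rw [hHint X2 U hX2G hUP]; exact hUw⟩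
  -- losing in C
  have hlB1 : ¬ C.winning (Y1 ∪ {u}) := by
    rw [hCW _ (hsub Y1 {u} hY1 hgY1 huH)]
    rintro (h | ⟨-, h⟩)
    · rw [hGint Y1 {u} hY1 huH] at h; exact hlY1 h
    · rw [hHint Y1 {u} hY1 huH] at h; exact hlu h
  have hlB2 : ¬ C.winning (Y2 ∪ U.erase u) := by
    rw [hCW _ (hsub Y2 (U.erase u) hY2 hgY2 herU)]
    rintro (h | ⟨-, h⟩)
    · rw [hGint Y2 _ hY2 herU] at h; exact hlY2 h
    · rw [hHint Y2 _ hY2 herU] at h; exact hler h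
  -- sums
  have hrep : ∀ Z : Finset α, Z ⊆ G.players →
      ∑ i ∈ Z, w i = ∑ a ∈ G.players, if a ∈ Z then w a else 0 := by
    intro Z hZ
    rw [Finset.sum_ite_mem, Finset.inter_eq_right.mpr hZ]
  have key : ∑ i ∈ X1, w i + ∑ i ∈ X2, w i = ∑ i ∈ Y1, w i + ∑ i ∈ Y2, w i := by
    rw [hrep X1 hX1G, hrep X2 hX2G, hrep Y1 hY1, hrep Y2 hY2,
      ← Finset.sum_add_distrib, ← Finset.sum_add_distrib]
    refine Finset.sum_congr rfl fun a _ => ?_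
    have h := htt a
    split_ifs at h ⊢ <;> first | ring1 | (exfalso; omega)
  have hdjX2U : Disjoint X2 U := by
    rw [Finset.disjoint_left]; intro a ha h2; exact hd (hX2G ha) (hUP h2)
  have hdjY1u : Disjoint Y1 ({u} : Finset α) := by
    rw [Finset.disjoint_left]; intro a ha h2; exact hd (hY1 ha) (huH h2)
  have hdjY2e : Disjoint Y2 (U.erase u) := by
    rw [Finset.disjoint_left]; intro a ha h2; exact hd (hY2 ha) (herU h2)
  have hsA2 : ∑ i ∈ X2 ∪ U, w i = ∑ i ∈ X2, w i + ∑ i ∈ U, w i :=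
    Finset.sum_union hdjX2U
  have hsB1 : ∑ i ∈ Y1 ∪ {u}, w i = ∑ i ∈ Y1, w i + w u := by
    rw [Finset.sum_union hdjY1u, Finset.sum_singleton]
  have hsB2 : ∑ i ∈ Y2 ∪ U.erase u, w i = ∑ i ∈ Y2, w i + ∑ i ∈ U.erase u, w i :=
    Finset.sum_union hdjY2e
  have hse : ∑ i ∈ U.erase u, w i + w u = ∑ i ∈ U, w i := Finset.sum_erase_add U w hu
  have h1 : q ≤ ∑ i ∈ X1, w i := (hq X1 (by rw [← hX1eq]; exact hsub X1 ∅ hX1G hgX1 (Finset.empty_subset _))).mp hwA1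
  have h2 : q ≤ ∑ i ∈ X2 ∪ U, w i := (hq _ (hsub X2 U hX2G hgX2 hUP)).mp hwA2
  have h3 : ¬ q ≤ ∑ i ∈ Y1 ∪ {u}, w i := fun h =>
    hlB1 ((hq _ (hsub Y1 {u} hY1 hgY1 huH)).mpr h)
  have h4 : ¬ q ≤ ∑ i ∈ Y2 ∪ U.erase u, w i := fun h =>
    hlB2 ((hq _ (hsub Y2 (U.erase u) hY2 hgY2 herU)).mpr h)
  push_neg at h3 h4
  rw [hsB1] at h3
  rw [hsB2] at h4
  rw [hsA2] at h2
  linarith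
end

section
/- Let G be a game of type B2 with parameters (n1, n2, k1), let g ∈ P2 be a player of level 2 of G, and let H be a simple game on a player set disjoint from that of G which has a minimal winning coalition with at least two players. Then the composition G∘_g H is not weighted. -/
open scoped Classical

open SimpleGame

/-! Weighted games are trade robust: if `X1, X2` win and `Y1, Y2` contain every player as often
as `X1, X2` together, then `Y1` or `Y2` wins, since both pairs have the same total weight.
In `G ∘_g H` take `S ⊆ P1` and `T ⊆ P2 \ {g}` of size `k1`, a minimal winning coalition `U` of
`H`, and `s ∈ S`, `t ∈ T`, `u ∈ U`. Then `S` and `T ∪ U` win. Trading `s` for `t` and `u` gives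
`(S - s + t) ∪ {u}`, which loses because `S - s + t` loses in `G` and `{u}` loses in `H`, and
`(T - t + s) ∪ (U - u)`, which loses because `T - t + s` loses in `G` and `U - u` loses in `H`. -/

namespace SimpleGame

variable {α : Type}

section TradingTransform

variable {X1 X2 Y1 Y2 : Finset α}

private theorem ite_mem_union_of_disjoint {Z W : Finset α} (h : Disjoint Z W) (a : α) :
    (if a ∈ Z ∪ W then 1 else 0 : ℕ) = (if a ∈ Z then 1 else 0) + (if a ∈ W then 1 else 0) := by
  by_cases hZ : a ∈ Z
  · simp [hZ, Finset.disjoint_left.mp h hZ]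
  · simp [hZ]

theorem IsTradingTransform2.union {E1 E2 F1 F2 : Finset α}
    (h : IsTradingTransform2 X1 X2 Y1 Y2) (h' : IsTradingTransform2 E1 E2 F1 F2)
    (h1 : Disjoint X1 E1) (h2 : Disjoint X2 E2) (h3 : Disjoint Y1 F1) (h4 : Disjoint Y2 F2) :
    IsTradingTransform2 (X1 ∪ E1) (X2 ∪ E2) (Y1 ∪ F1) (Y2 ∪ F2) := by
  intro a
  rw [ite_mem_union_of_disjoint h1, ite_mem_union_of_disjoint h2, ite_mem_union_of_disjoint h3,
    ite_mem_union_of_disjoint h4]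
  linarith [h a, h' a]

theorem isTradingTransform2_exchange {S T : Finset α} {s t : α} (hs : s ∈ S) (ht : t ∈ T)
    (hsT : s ∉ T) (htS : t ∉ S) :
    IsTradingTransform2 S T (insert t (S.erase s)) (insert s (T.erase t)) := by
  intro a
  by_cases has : a = s
  · subst has; simp [hs, hsT, ne_of_mem_of_not_mem hs htS]
  by_cases hat : a = t
  · subst hat; simp [ht, htS, has]
  · simp [has, hat]

theorem isTradingTransform2_split {U : Finset α} {u : α} (hu : u ∈ U) :
    IsTradingTransform2 ∅ U {u} (U.erase u) := by
  intro a
  by_cases hau : a = u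
  · subst hau; simp [hu]
  · simp [hau]

theorem IsTradingTransform2.sum_add_sum (h : IsTradingTransform2 X1 X2 Y1 Y2) (w : α → ℝ) :
    ∑ i ∈ X1, w i + ∑ i ∈ X2, w i = ∑ i ∈ Y1, w i + ∑ i ∈ Y2, w i := by
  set P := X1 ∪ X2 ∪ Y1 ∪ Y2
  have count : ∀ X ⊆ P, ∑ i ∈ X, w i = ∑ i ∈ P, ((if i ∈ X then 1 else 0 : ℕ) : ℝ) * w i := by
    intro X hX
    simp only [Nat.cast_ite, Nat.cast_one, Nat.cast_zero, ite_mul, one_mul, zero_mul]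
    rw [Finset.sum_ite_mem, Finset.inter_eq_right.2 hX]
  rw [count X1 (by grind), count X2 (by grind), count Y1 (by grind), count Y2 (by grind),
    ← Finset.sum_add_distrib, ← Finset.sum_add_distrib]
  refine Finset.sum_congr rfl fun i _ => ?_
  rw [← add_mul, ← add_mul, ← Nat.cast_add, ← Nat.cast_add, h i]

theorem Weighted.winning_or_winning_of_isTradingTransform2 {C : SimpleGame α} (hC : C.Weighted)
    (h : IsTradingTransform2 X1 X2 Y1 Y2) (hX1 : C.winning X1) (hX2 : C.winning X2)
    (hY1 : Y1 ⊆ C.players) (hY2 : Y2 ⊆ C.players) : C.winning Y1 ∨ C.winning Y2 := by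
  obtain ⟨w, q, -, hq⟩ := hC
  have hX1q := (hq X1 (C.winning_subset X1 hX1)).1 hX1
  have hX2q := (hq X2 (C.winning_subset X2 hX2)).1 hX2
  by_contra! hY
  have hY1q := lt_of_not_ge (mt (hq Y1 hY1).2 hY.1)
  have hY2q := lt_of_not_ge (mt (hq Y2 hY2).2 hY.2)
  linarith [h.sum_add_sum w]

end TradingTransform

theorem MinWinning.not_winning_singleton {H : SimpleGame α} {U : Finset α} {u : α}
    (hU : H.MinWinning U) (hUcard : 2 ≤ U.card) (hu : u ∈ U) : ¬ H.winning {u} :=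
  hU.2 _ <| Finset.ssubset_iff_subset_ne.2
    ⟨Finset.singleton_subset_iff.2 hu, fun h => by rw [← h, Finset.card_singleton] at hUcard; omega⟩

structure Exchange (G : SimpleGame α) (g : α) where
  S : Finset α
  T : Finset α
  s : α
  t : α
  S_subset : S ⊆ G.players.erase g
  T_subset : T ⊆ G.players.erase g
  s_mem : s ∈ S
  t_mem : t ∈ T
  s_notMem : s ∉ T
  t_notMem : t ∉ S
  winning_S : G.winning S
  winning_insert_T : G.winning (insert g T)
  not_winning_exchange_S : ¬ G.winning (insert t (S.erase s))
  not_winning_exchange_T : ¬ G.winning (insert s (T.erase t))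

namespace IsComposition

variable {C G H : SimpleGame α} {g : α} {Z W : Finset α}

theorem union_subset_players (hC : IsComposition C G H g) (hZ : Z ⊆ G.players.erase g)
    (hW : W ⊆ H.players) : Z ∪ W ⊆ C.players := by
  rw [hC.1, Finset.sdiff_singleton_eq_erase]
  exact Finset.union_subset_union hZ hW

theorem winning_union_iff (hC : IsComposition C G H g) (hdisj : Disjoint G.players H.players)
    (hZ : Z ⊆ G.players.erase g) (hW : W ⊆ H.players) :
    C.winning (Z ∪ W) ↔ G.winning Z ∨ (G.winning (insert g Z) ∧ H.winning W) := by
  have hZ' : Z ⊆ G.players := hZ.trans (Finset.erase_subset _ _)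
  have hZG : (Z ∪ W) ∩ G.players = Z := by
    rw [Finset.union_inter_distrib_right, Finset.inter_eq_left.2 hZ',
      Finset.disjoint_iff_inter_eq_empty.1 (hdisj.symm.mono_left hW), Finset.union_empty]
  have hWH : (Z ∪ W) ∩ H.players = W := by
    rw [Finset.union_inter_distrib_right, Finset.inter_eq_left.2 hW,
      Finset.disjoint_iff_inter_eq_empty.1 (hdisj.mono_left hZ'), Finset.empty_union]
  rw [hC.2 _ (hC.union_subset_players hZ hW), hZG, hWH]

theorem not_weighted_of_exchange (hC : IsComposition C G H g)
    (hdisj : Disjoint G.players H.players) (E : G.Exchange g) {U : Finset α}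
    (hU : H.MinWinning U) (hUcard : 2 ≤ U.card) : ¬ C.Weighted := by
  intro hW
  obtain ⟨u, hu⟩ : U.Nonempty := Finset.card_pos.1 (by omega)
  have hUH : U ⊆ H.players := H.winning_subset U hU.1
  have hu' : {u} ⊆ H.players := Finset.singleton_subset_iff.2 (hUH hu)
  have hUu : U.erase u ⊆ H.players := (Finset.erase_subset _ _).trans hUH
  have hS' : insert E.t (E.S.erase E.s) ⊆ G.players.erase g :=
    Finset.insert_subset (E.T_subset E.t_mem) ((Finset.erase_subset _ _).trans E.S_subset)
  have hT' : insert E.s (E.T.erase E.t) ⊆ G.players.erase g :=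
    Finset.insert_subset (E.S_subset E.s_mem) ((Finset.erase_subset _ _).trans E.T_subset)
  have disj {Z W : Finset α} (hZ : Z ⊆ G.players.erase g) (hW : W ⊆ H.players) : Disjoint Z W :=
    (hdisj.mono_left (Finset.erase_subset _ _)).mono hZ hW
  have trade := (isTradingTransform2_exchange E.s_mem E.t_mem E.s_notMem E.t_notMem).union
    (isTradingTransform2_split hu) (disj E.S_subset (Finset.empty_subset _)) (disj E.T_subset hUH)
    (disj hS' hu') (disj hT' hUu)
  rcases hW.winning_or_winning_of_isTradingTransform2 trade
      ((hC.winning_union_iff hdisj E.S_subset (Finset.empty_subset _)).2 (Or.inl E.winning_S))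
      ((hC.winning_union_iff hdisj E.T_subset hUH).2 (Or.inr ⟨E.winning_insert_T, hU.1⟩))
      (hC.union_subset_players hS' hu') (hC.union_subset_players hT' hUu) with h | h
  · rw [hC.winning_union_iff hdisj hS' hu'] at h
    exact h.elim E.not_winning_exchange_S fun h => hU.not_winning_singleton hUcard hu h.2
  · rw [hC.winning_union_iff hdisj hT' hUu] at h
    exact h.elim E.not_winning_exchange_T fun h => hU.2 _ (Finset.erase_ssubset hu) h.2

end IsComposition

theorem nonempty_exchange_of_B2 {G : SimpleGame α} {P1 P2 : Finset α} {k1 : ℕ} {g : α}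
    (hP : Disjoint P1 P2) (hplayers : G.players = P1 ∪ P2) (hk1 : 1 < k1)
    (hk1n1 : k1 ≤ P1.card) (hk2n2 : k1 + 1 ≤ P2.card)
    (hwin : ∀ X ⊆ G.players, (G.winning X ↔ (k1 ≤ (X ∩ P1).card ∨ k1 + 1 ≤ X.card)))
    (hg : g ∈ P2) : Nonempty (G.Exchange g) := by
  have hP1G : P1 ⊆ G.players.erase g := fun a ha => Finset.mem_erase.2
    ⟨fun h => Finset.disjoint_left.1 hP (h ▸ ha) hg, hplayers ▸ Finset.mem_union_left _ ha⟩
  have hP2G : P2.erase g ⊆ G.players.erase g :=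
    Finset.erase_subset_erase _ (hplayers ▸ Finset.subset_union_right)
  have hG : G.players.erase g ⊆ G.players := Finset.erase_subset _ _
  obtain ⟨S, hSP1, hScard⟩ := Finset.exists_subset_card_eq hk1n1
  obtain ⟨T, hTP2, hTcard⟩ := Finset.exists_subset_card_eq (s := P2.erase g) (n := k1)
    (by rw [Finset.card_erase_of_mem hg]; omega)
  obtain ⟨s, hs⟩ : S.Nonempty := Finset.card_pos.1 (by omega)
  obtain ⟨t, ht⟩ : T.Nonempty := Finset.card_pos.1 (by omega)
  have hTP1 : Disjoint T P1 := hP.symm.mono_left (hTP2.trans (Finset.erase_subset _ _))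
  have hgT : g ∉ T := fun h => (Finset.mem_erase.1 (hTP2 h)).1 rfl
  have hgG : g ∈ G.players := hplayers ▸ Finset.mem_union_right _ hg
  have losing {X : Finset α} (hX : X ⊆ G.players) (hcard : X.card ≤ k1)
      (hX1 : (X ∩ P1).card < k1) : ¬ G.winning X := fun h => by
    have := (hwin X hX).1 h
    omega
  have hS' : insert t (S.erase s) ⊆ G.players.erase g :=
    Finset.insert_subset (hP2G (hTP2 ht)) ((Finset.erase_subset _ _).trans (hSP1.trans hP1G))
  have hT' : insert s (T.erase t) ⊆ G.players.erase g :=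
    Finset.insert_subset (hP1G (hSP1 hs)) ((Finset.erase_subset _ _).trans (hTP2.trans hP2G))
  refine ⟨{ S, T, s, t
            S_subset := hSP1.trans hP1G
            T_subset := hTP2.trans hP2G
            s_mem := hs
            t_mem := ht
            s_notMem := fun h => Finset.disjoint_left.1 hTP1 h (hSP1 hs)
            t_notMem := fun h => Finset.disjoint_left.1 hTP1 ht (hSP1 h)
            winning_S := ?_
            winning_insert_T := ?_
            not_winning_exchange_S := ?_
            not_winning_exchange_T := ?_ }⟩
  · refine (hwin S (hSP1.trans (hP1G.trans hG))).2 (Or.inl ?_)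
    rw [Finset.inter_eq_left.2 hSP1, hScard]
  · refine (hwin _ (Finset.insert_subset hgG (hTP2.trans (hP2G.trans hG)))).2 (Or.inr ?_)
    rw [Finset.card_insert_of_notMem hgT, hTcard]
  · have hcard := Finset.card_erase_of_mem hs
    refine losing (hS'.trans hG) ?_ ?_
    · have := Finset.card_insert_le t (S.erase s)
      omega
    · rw [Finset.insert_inter_of_notMem (Finset.disjoint_left.1 hTP1 ht)]
      have := Finset.card_le_card (Finset.inter_subset_left (s₁ := S.erase s) (s₂ := P1))
      omega
  · have hcard := Finset.card_erase_of_mem ht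
    refine losing (hT'.trans hG) ?_ ?_
    · have := Finset.card_insert_le s (T.erase t)
      omega
    · rw [Finset.insert_inter_of_mem (hSP1 hs),
        Finset.disjoint_iff_inter_eq_empty.1 (hTP1.mono_left (Finset.erase_subset _ _)),
        Finset.insert_empty, Finset.card_singleton]
      exact hk1

end SimpleGame

/-- the composition of a game of type B2, over a player `g` of
level 2, with a game having a minimal winning coalition of size at least two,
is not weighted. -/
theorem statement16 {α : Type} (n1 n2 k1 : ℕ)
    (G : SimpleGame α) (P1 P2 : Finset α)
    (hP : Disjoint P1 P2) (hplayers : G.players = P1 ∪ P2)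
    (hP1 : P1.card = n1) (hP2 : P2.card = n2)
    (hk1 : 1 < k1) (hk1n1 : k1 ≤ n1) (hk2n2 : k1 + 1 ≤ n2)
    (hwin : ∀ X ⊆ G.players,
      (G.winning X ↔ (k1 ≤ (X ∩ P1).card ∨ k1 + 1 ≤ X.card)))
    (g : α) (hg : g ∈ P2)
    (H C : SimpleGame α)
    (hdisj : Disjoint G.players H.players)
    (hU : ∃ U : Finset α, H.MinWinning U ∧ 2 ≤ U.card)
    (hC : SimpleGame.IsComposition C G H g) :
    ¬ C.Weighted := by
  obtain ⟨U, hUmin, hUcard⟩ := hU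
  obtain ⟨E⟩ := nonempty_exchange_of_B2 hP hplayers hk1 (hP1 ▸ hk1n1) (hP2 ▸ hk2n2) hwin hg
  exact hC.not_weighted_of_exchange hdisj E hUmin hUcard
end

section
/- Let G be a game of type B3 with parameters (n1, n2, k1), let g ∈ P2 be a player of level 2 of G, and let H be a simple game on a player set disjoint from that of G which has a minimal winning coalition with at least two players. Then the composition G∘_g H is not weighted. -/
open scoped Classical

open SimpleGame
/-- the composition of a game of type B3, over a player `g` of
level 2, with a game having a minimal winning coalition of size at least two,
is not weighted. -/
theorem statement17 {α : Type} (n1 n2 k1 : ℕ)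
    (G : SimpleGame α) (P1 P2 : Finset α)
    (hP : Disjoint P1 P2) (hplayers : G.players = P1 ∪ P2)
    (hP1 : P1.card = n1) (hP2 : P2.card = n2)
    (hk1n1 : k1 ≤ n1) (hn2 : 2 < n2) (hn2k : n2 < k1 + 1)
    (hwin : ∀ X ⊆ G.players,
      (G.winning X ↔ (k1 ≤ (X ∩ P1).card ∨ k1 + 1 ≤ X.card)))
    (g : α) (hg : g ∈ P2)
    (H C : SimpleGame α)
    (hdisj : Disjoint G.players H.players)
    (hU : ∃ U : Finset α, H.MinWinning U ∧ 2 ≤ U.card)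
    (hC : SimpleGame.IsComposition C G H g) :
    ¬ C.Weighted := by
  rintro ⟨w, q, hw, hq⟩
  obtain ⟨U, ⟨hUwin, hUmin⟩, hUcard⟩ := hU
  have hUH : U ⊆ H.players := H.winning_subset U hUwin
  have hgP1 : g ∉ P1 := Finset.disjoint_right.mp hP hg
  have hP1G : P1 ⊆ G.players := hplayers ▸ Finset.subset_union_left
  have hP2G : P2 ⊆ G.players := hplayers ▸ Finset.subset_union_right
  have hk3 : 3 ≤ k1 := by omega
  -- pick a ≠ b in P2 \ {g}
  have h2 : 1 < (P2.erase g).card := by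
    rw [Finset.card_erase_of_mem hg, hP2]; omega
  obtain ⟨a, ha, b, hb, hab⟩ := Finset.one_lt_card.mp h2
  have haP2 : a ∈ P2 := Finset.mem_of_mem_erase ha
  have hbP2 : b ∈ P2 := Finset.mem_of_mem_erase hb
  have hag : a ≠ g := Finset.ne_of_mem_erase ha
  have hbg : b ≠ g := Finset.ne_of_mem_erase hb
  have haP1 : a ∉ P1 := Finset.disjoint_right.mp hP haP2
  have hbP1 : b ∉ P1 := Finset.disjoint_right.mp hP hbP2
  -- pick A ⊆ P1 of card k1-2, and p ≠ p' in P1 \ A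
  obtain ⟨A, hA, hAcard⟩ := Finset.exists_subset_card_eq
    (show k1 - 2 ≤ P1.card by rw [hP1]; omega)
  have h2' : 1 < (P1 \ A).card := by
    rw [Finset.card_sdiff_of_subset hA, hAcard, hP1]; omega
  obtain ⟨p, hp, p', hp', hpp'⟩ := Finset.one_lt_card.mp h2'
  have hpP1 : p ∈ P1 := (Finset.mem_sdiff.mp hp).1
  have hpA : p ∉ A := (Finset.mem_sdiff.mp hp).2
  have hp'P1 : p' ∈ P1 := (Finset.mem_sdiff.mp hp').1
  have hp'A : p' ∉ A := (Finset.mem_sdiff.mp hp').2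
  -- pick u (and a witness v) in U
  obtain ⟨u, hu, v, hv, hvu⟩ := Finset.one_lt_card.mp (show 1 < U.card by omega)
  -- cross-membership facts
  have hHnotG : ∀ x ∈ H.players, x ∉ G.players := fun x hx =>
    Finset.disjoint_right.mp hdisj hx
  have hGnotH : ∀ x ∈ G.players, x ∉ H.players := fun x hx =>
    Finset.disjoint_left.mp hdisj hx
  have haA : a ∉ A := fun h => haP1 (hA h)
  have hbA : b ∉ A := fun h => hbP1 (hA h)
  have hgA : g ∉ A := fun h => hgP1 (hA h)
  have hpa : p ≠ a := fun h => haP1 (h ▸ hpP1)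
  have hpb : p ≠ b := fun h => hbP1 (h ▸ hpP1)
  have hp'a : p' ≠ a := fun h => haP1 (h ▸ hp'P1)
  have hp'b : p' ≠ b := fun h => hbP1 (h ▸ hp'P1)
  have hgp : g ≠ p := fun h => hgP1 (h ▸ hpP1)
  have hgp' : g ≠ p' := fun h => hgP1 (h ▸ hp'P1)
  -- the four core coalitions (G-parts)
  set S1 : Finset α := insert p (insert p' A) with hS1def
  set S2 : Finset α := insert a (insert b A) with hS2def
  set S3 : Finset α := insert p (insert a A) with hS3def
  set S4 : Finset α := insert p' (insert b A) with hS4def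
  have hS1sub : S1 ⊆ P1 :=
    Finset.insert_subset_iff.mpr ⟨hpP1, Finset.insert_subset_iff.mpr ⟨hp'P1, hA⟩⟩
  have hS1G : S1 ⊆ G.players := hS1sub.trans hP1G
  have hS2G : S2 ⊆ G.players :=
    Finset.insert_subset_iff.mpr ⟨hP2G haP2,
      Finset.insert_subset_iff.mpr ⟨hP2G hbP2, hA.trans hP1G⟩⟩
  have hS3G : S3 ⊆ G.players :=
    Finset.insert_subset_iff.mpr ⟨hP1G hpP1,
      Finset.insert_subset_iff.mpr ⟨hP2G haP2, hA.trans hP1G⟩⟩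
  have hS4G : S4 ⊆ G.players :=
    Finset.insert_subset_iff.mpr ⟨hP1G hp'P1,
      Finset.insert_subset_iff.mpr ⟨hP2G hbP2, hA.trans hP1G⟩⟩
  have hgS1 : g ∉ S1 := by simp [hS1def, hgp, hgp', hgA]
  have hgS2 : g ∉ S2 := by
    simp only [hS2def, Finset.mem_insert]
    push_neg
    exact ⟨fun h => hag h.symm, fun h => hbg h.symm, hgA⟩
  have hgS3 : g ∉ S3 := by
    simp only [hS3def, Finset.mem_insert]
    push_neg
    exact ⟨hgp, fun h => hag h.symm, hgA⟩
  have hgS4 : g ∉ S4 := by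
    simp only [hS4def, Finset.mem_insert]
    push_neg
    exact ⟨hgp', fun h => hbg h.symm, hgA⟩
  -- cards
  have hS1card : S1.card = k1 := by
    rw [hS1def, Finset.card_insert_of_notMem (by simp [hpp', hpA]),
      Finset.card_insert_of_notMem hp'A, hAcard]; omega
  have hS2card : S2.card = k1 := by
    rw [hS2def, Finset.card_insert_of_notMem (by simp [hab, haA]),
      Finset.card_insert_of_notMem hbA, hAcard]; omega
  have hS3card : S3.card = k1 := by
    rw [hS3def, Finset.card_insert_of_notMem (by simp [hpa, hpA]),
      Finset.card_insert_of_notMem haA, hAcard]; omega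
  have hS4card : S4.card = k1 := by
    rw [hS4def, Finset.card_insert_of_notMem (by simp [hp'b, hp'A]),
      Finset.card_insert_of_notMem hbA, hAcard]; omega
  have hAinterP1 : A ∩ P1 = A := Finset.inter_eq_left.mpr hA
  have hS3P1 : S3 ∩ P1 = insert p A := by
    rw [hS3def, Finset.insert_inter_of_mem hpP1,
      Finset.insert_inter_of_notMem haP1, hAinterP1]
  have hS4P1 : S4 ∩ P1 = insert p' A := by
    rw [hS4def, Finset.insert_inter_of_mem hp'P1,
      Finset.insert_inter_of_notMem hbP1, hAinterP1]
  have hS3P1card : (S3 ∩ P1).card = k1 - 1 := by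
    rw [hS3P1, Finset.card_insert_of_notMem hpA, hAcard]; omega
  have hS4P1card : (S4 ∩ P1).card = k1 - 1 := by
    rw [hS4P1, Finset.card_insert_of_notMem hp'A, hAcard]; omega
  -- intersection helper
  have key : ∀ S T : Finset α, S ⊆ G.players → T ⊆ H.players →
      (S ∪ T) ∩ G.players = S ∧ (S ∪ T) ∩ H.players = T := by
    intro S T hS hT
    constructor <;> ext x <;>
      simp only [Finset.mem_inter, Finset.mem_union] <;> constructor
    · rintro ⟨hx1 | hx1, hx2⟩
      · exact hx1
      · exact absurd hx2 (hHnotG x (hT hx1))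
    · exact fun hx => ⟨Or.inl hx, hS hx⟩
    · rintro ⟨hx1 | hx1, hx2⟩
      · exact absurd hx2 (hGnotH x (hS hx1))
      · exact hx1
    · exact fun hx => ⟨Or.inr hx, hT hx⟩
  -- membership in C.players
  have hCsub : ∀ S T : Finset α, S ⊆ G.players → g ∉ S → T ⊆ H.players →
      S ∪ T ⊆ C.players := by
    intro S T hS hgS hT x hx
    rw [hC.1, Finset.mem_union]
    rcases Finset.mem_union.mp hx with hx | hx
    · exact Or.inl (Finset.mem_sdiff.mpr ⟨hS hx, by
        simp only [Finset.mem_singleton]; rintro rfl; exact hgS hx⟩)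
    · exact Or.inr (hT hx)
  -- the four coalitions
  have hU'H : U.erase u ⊆ H.players := (Finset.erase_subset u U).trans hUH
  have huH : ({u} : Finset α) ⊆ H.players := Finset.singleton_subset_iff.mpr (hUH hu)
  set X1 : Finset α := S1 ∪ (∅ : Finset α) with hX1def
  set X2 : Finset α := S2 ∪ U with hX2def
  set Y1 : Finset α := S3 ∪ U.erase u with hY1def
  set Y2 : Finset α := S4 ∪ {u} with hY2def
  have hX1C : X1 ⊆ C.players := hCsub _ _ hS1G hgS1 (Finset.empty_subset _)
  have hX2C : X2 ⊆ C.players := hCsub _ _ hS2G hgS2 hUH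
  have hY1C : Y1 ⊆ C.players := hCsub _ _ hS3G hgS3 hU'H
  have hY2C : Y2 ⊆ C.players := hCsub _ _ hS4G hgS4 huH
  have kX1 := key S1 ∅ hS1G (Finset.empty_subset _)
  have kX2 := key S2 U hS2G hUH
  have kY1 := key S3 (U.erase u) hS3G hU'H
  have kY2 := key S4 {u} hS4G huH
  -- X1 is winning
  have hwinX1 : C.winning X1 := by
    rw [(hC.2 X1 hX1C), kX1.1]
    refine Or.inl ((hwin S1 hS1G).mpr (Or.inl ?_))
    rw [Finset.inter_eq_left.mpr hS1sub, hS1card]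
  -- X2 is winning
  have hwinX2 : C.winning X2 := by
    rw [(hC.2 X2 hX2C), kX2.1, kX2.2]
    refine Or.inr ⟨(hwin _ ?_).mpr (Or.inr ?_), hUwin⟩
    · exact Finset.insert_subset_iff.mpr ⟨hP2G hg, hS2G⟩
    · rw [Finset.card_insert_of_notMem hgS2, hS2card]
  -- Y1 is losing
  have hloseY1 : ¬ C.winning Y1 := by
    rw [(hC.2 Y1 hY1C), kY1.1, kY1.2]
    rintro (h | ⟨-, h⟩)
    · rcases (hwin S3 hS3G).mp h with h' | h' <;> omega
    · exact hUmin _ (Finset.erase_ssubset hu) h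
  -- Y2 is losing
  have hloseY2 : ¬ C.winning Y2 := by
    rw [(hC.2 Y2 hY2C), kY2.1, kY2.2]
    rintro (h | ⟨-, h⟩)
    · rcases (hwin S4 hS4G).mp h with h' | h' <;> omega
    · refine hUmin {u} ?_ h
      rw [Finset.ssubset_iff_of_subset (Finset.singleton_subset_iff.mpr hu)]
      exact ⟨v, hv, Finset.notMem_singleton.mpr hvu.symm⟩
  -- sums
  have hdS2U : Disjoint S2 U := Finset.disjoint_left.mpr
    (fun x hx hx' => hGnotH x (hS2G hx) (hUH hx'))
  have hdS3U : Disjoint S3 (U.erase u) := Finset.disjoint_left.mpr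
    (fun x hx hx' => hGnotH x (hS3G hx) (hU'H hx'))
  have hdS4u : Disjoint S4 ({u} : Finset α) := Finset.disjoint_left.mpr
    (fun x hx hx' => hGnotH x (hS4G hx) (huH hx'))
  have e1 : ∑ i ∈ X1, w i = w p + w p' + ∑ i ∈ A, w i := by
    rw [hX1def, Finset.union_empty, hS1def,
      Finset.sum_insert (by simp [hpp', hpA]), Finset.sum_insert hp'A]
    ring
  have e2 : ∑ i ∈ X2, w i = w a + w b + ∑ i ∈ A, w i + ∑ i ∈ U, w i := by
    rw [hX2def, Finset.sum_union hdS2U, hS2def,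
      Finset.sum_insert (by simp [hab, haA]), Finset.sum_insert hbA]
    ring
  have e3 : ∑ i ∈ Y1, w i = w p + w a + ∑ i ∈ A, w i + ∑ i ∈ U.erase u, w i := by
    rw [hY1def, Finset.sum_union hdS3U, hS3def,
      Finset.sum_insert (by simp [hpa, hpA]), Finset.sum_insert haA]
    ring
  have e4 : ∑ i ∈ Y2, w i = w p' + w b + ∑ i ∈ A, w i + w u := by
    rw [hY2def, Finset.sum_union hdS4u, hS4def,
      Finset.sum_insert (by simp [hp'b, hp'A]), Finset.sum_insert hbA,
      Finset.sum_singleton]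
    ring
  have eU : w u + ∑ i ∈ U.erase u, w i = ∑ i ∈ U, w i :=
    Finset.add_sum_erase U w hu
  have q1 : q ≤ ∑ i ∈ X1, w i := (hq X1 hX1C).mp hwinX1
  have q2 : q ≤ ∑ i ∈ X2, w i := (hq X2 hX2C).mp hwinX2
  have q3 : ∑ i ∈ Y1, w i < q :=
    lt_of_not_ge fun h => hloseY1 ((hq Y1 hY1C).mpr h)
  have q4 : ∑ i ∈ Y2, w i < q :=
    lt_of_not_ge fun h => hloseY2 ((hq Y2 hY2C).mpr h)
  linarith
end

section
/- Let G be a game of type T3 with parameters (n1, n2, n3, k1, k2, k3), let g ∈ P3 be a player of level 3 of G, and let H be a simple game on a player set disjoint from that of G which has a minimal winning coalition with at least two players. Then the composition G∘_g H is not weighted. -/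
open scoped Classical

open SimpleGame
/-- the composition of a game of type T3, over a player `g` of
level 3, with a game having a minimal winning coalition of size at least two,
is not weighted.  (Here `k3 + 1 = k1 + n2 + n3` encodes `k3 - k1 = n2 + n3 - 1`
and `k1 + n2 < k2` encodes `k2 - n2 > k1`.) -/
theorem statement18 {α : Type} (n1 n2 n3 k1 k2 k3 : ℕ)
    (hn1 : 1 ≤ n1) (hn2 : 1 ≤ n2) (hn3 : 2 ≤ n3) (hk1 : 1 ≤ k1)
    (hk12 : k1 < k2) (hk23 : k3 = k2 + 1)
    (hn12 : k2 ≤ n1 + n2)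
    (hk31 : k3 + 1 = k1 + n2 + n3)
    (hk2n2 : k1 + n2 < k2)
    (G : SimpleGame α) (P1 P2 P3 : Finset α)
    (h12 : Disjoint P1 P2) (h13 : Disjoint P1 P3) (h23 : Disjoint P2 P3)
    (hplayers : G.players = P1 ∪ P2 ∪ P3)
    (hP1 : P1.card = n1) (hP2 : P2.card = n2) (hP3 : P3.card = n3)
    (hwin : ∀ X ⊆ G.players,
      (G.winning X ↔ (k2 ≤ (X ∩ (P1 ∪ P2)).card ∨
        (k1 ≤ (X ∩ P1).card ∧ k3 ≤ X.card))))
    (g : α) (hg : g ∈ P3)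
    (H C : SimpleGame α)
    (hdisj : Disjoint G.players H.players)
    (hU : ∃ U : Finset α, H.MinWinning U ∧ 2 ≤ U.card)
    (hC : SimpleGame.IsComposition C G H g) :
    ¬ C.Weighted := by
    classical
  -- Extract the minimal winning coalition of `H` and a member `u`.
  obtain ⟨U, hUmin, hUcard⟩ := hU
  obtain ⟨u, hu⟩ := Finset.card_pos.mp (by omega : 0 < U.card)
  have hUH : U ⊆ H.players := H.winning_subset U hUmin.1
  have hn3' : 3 ≤ n3 := by omega
  -- Basic membership facts
  have hgP1 : g ∉ P1 := Finset.disjoint_right.mp h13 hg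
  have hgP2 : g ∉ P2 := Finset.disjoint_right.mp h23 hg
  have hP1G : P1 ⊆ G.players := by
    rw [hplayers]; exact Finset.subset_union_left.trans Finset.subset_union_left
  have hP2G : P2 ⊆ G.players := by
    rw [hplayers]; exact Finset.subset_union_right.trans Finset.subset_union_left
  have hP3G : P3 ⊆ G.players := by rw [hplayers]; exact Finset.subset_union_right
  -- Choose the auxiliary sets
  obtain ⟨A1, hA1P1, hA1card⟩ :=
    Finset.exists_subset_card_eq (s := P1) (n := k2 - n2) (by rw [hP1]; omega)
  obtain ⟨A, hAA1, hAcard⟩ :=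
    Finset.exists_subset_card_eq (s := A1) (n := k1) (by rw [hA1card]; omega)
  have hAP1 : A ⊆ P1 := hAA1.trans hA1P1
  obtain ⟨b, hb⟩ := Finset.card_pos.mp (by rw [hP2]; omega : 0 < P2.card)
  have hEcard : (P3.erase g).card = n3 - 1 := by rw [Finset.card_erase_of_mem hg, hP3]
  obtain ⟨p, hp⟩ := Finset.card_pos.mp (by rw [hEcard]; omega : 0 < (P3.erase g).card)
  have hpP3 : p ∈ P3 := Finset.mem_of_mem_erase hp
  have hpg : p ≠ g := Finset.ne_of_mem_erase hp
  -- Abbreviations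
  set B' : Finset α := P2.erase b with hB'
  set E : Finset α := P3.erase g with hE
  set E' : Finset α := E.erase p with hE'
  set U' : Finset α := U.erase u with hU'
  have hB'P2 : B' ⊆ P2 := Finset.erase_subset _ _
  have hEP3 : E ⊆ P3 := Finset.erase_subset _ _
  have hE'P3 : E' ⊆ P3 := (Finset.erase_subset _ _).trans hEP3
  have hU'U : U' ⊆ U := Finset.erase_subset _ _
  have hB'card : B'.card = n2 - 1 := by rw [hB', Finset.card_erase_of_mem hb, hP2]
  have hE'card : E'.card = n3 - 2 := by
    rw [hE', Finset.card_erase_of_mem hp, hEcard]; omega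
  -- Disjointness facts
  have dA1P2 : Disjoint A1 P2 := h12.mono_left hA1P1
  have dAB' : Disjoint A B' := (h12.mono_left hAP1).mono_right hB'P2
  have dA1B' : Disjoint A1 B' := dA1P2.mono_right hB'P2
  have dAP2 : Disjoint A P2 := h12.mono_left hAP1
  have dAB'E : Disjoint (A ∪ B') E := by
    rw [Finset.disjoint_union_left]
    exact ⟨(h13.mono_left hAP1).mono_right hEP3, (h23.mono_left hB'P2).mono_right hEP3⟩
  have dAP2E' : Disjoint (A ∪ P2) E' := by
    rw [Finset.disjoint_union_left]
    exact ⟨(h13.mono_left hAP1).mono_right hE'P3, h23.mono_right hE'P3⟩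
  have dpA1B' : p ∉ A1 ∪ B' := by
    intro hmem
    rcases Finset.mem_union.mp hmem with h' | h'
    · exact Finset.disjoint_left.mp h13 (hA1P1 h') hpP3
    · exact Finset.disjoint_left.mp h23 (hB'P2 h') hpP3
  -- subsets of G.players and H-disjointness
  have hT2G : A ∪ B' ∪ E ⊆ G.players := by
    intro x hx
    rcases Finset.mem_union.mp hx with hx | hx
    · rcases Finset.mem_union.mp hx with hx | hx
      · exact hP1G (hAP1 hx)
      · exact hP2G (hB'P2 hx)
    · exact hP3G (hEP3 hx)
  have hZ1G : A1 ∪ B' ∪ {p} ⊆ G.players := by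
    intro x hx
    rcases Finset.mem_union.mp hx with hx | hx
    · rcases Finset.mem_union.mp hx with hx | hx
      · exact hP1G (hA1P1 hx)
      · exact hP2G (hB'P2 hx)
    · rw [Finset.mem_singleton] at hx; subst hx; exact hP3G hpP3
  have hZ2G : A ∪ P2 ∪ E' ⊆ G.players := by
    intro x hx
    rcases Finset.mem_union.mp hx with hx | hx
    · rcases Finset.mem_union.mp hx with hx | hx
      · exact hP1G (hAP1 hx)
      · exact hP2G hx
    · exact hP3G (hE'P3 hx)
  have hX1G : A1 ∪ P2 ⊆ G.players := by
    intro x hx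
    rcases Finset.mem_union.mp hx with hx | hx
    · exact hP1G (hA1P1 hx)
    · exact hP2G hx
  -- intersection computation helper
  have interG : ∀ Sg Sh : Finset α, Sg ⊆ G.players → Sh ⊆ H.players →
      (Sg ∪ Sh) ∩ G.players = Sg ∧ (Sg ∪ Sh) ∩ H.players = Sh := by
    intro Sg Sh hSg hSh
    constructor
    · ext x
      simp only [Finset.mem_inter, Finset.mem_union]
      constructor
      · rintro ⟨hx | hx, hxG⟩
        · exact hx
        · exact absurd hxG (Finset.disjoint_right.mp hdisj (hSh hx))
      · intro hx; exact ⟨Or.inl hx, hSg hx⟩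
    · ext x
      simp only [Finset.mem_inter, Finset.mem_union]
      constructor
      · rintro ⟨hx | hx, hxH⟩
        · exact absurd hxH (Finset.disjoint_left.mp hdisj (hSg hx))
        · exact hx
      · intro hx; exact ⟨Or.inr hx, hSh hx⟩
  -- the four coalitions
  set X1 : Finset α := A1 ∪ P2 with hX1def
  set X2 : Finset α := A ∪ B' ∪ E ∪ U with hX2def
  set Y1 : Finset α := A1 ∪ B' ∪ {p} ∪ {u} with hY1def
  set Y2 : Finset α := A ∪ P2 ∪ E' ∪ U' with hY2def
  -- subsets of C.players
  have hCpl := hC.1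
  have hsubC : ∀ Sg Sh : Finset α, Sg ⊆ G.players → g ∉ Sg → Sh ⊆ H.players →
      (Sg ∪ Sh) ⊆ C.players := by
    intro Sg Sh hSg hgSg hSh x hx
    rw [hCpl, Finset.mem_union]
    rcases Finset.mem_union.mp hx with hx | hx
    · left
      rw [Finset.mem_sdiff, Finset.mem_singleton]
      exact ⟨hSg hx, fun h => hgSg (h ▸ hx)⟩
    · exact Or.inr (hSh hx)
  have hgX1 : g ∉ A1 ∪ P2 := by
    intro h'
    rcases Finset.mem_union.mp h' with h' | h'
    · exact hgP1 (hA1P1 h')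
    · exact hgP2 h'
  have hgT2 : g ∉ A ∪ B' ∪ E := by
    intro h'
    rcases Finset.mem_union.mp h' with h' | h'
    · rcases Finset.mem_union.mp h' with h' | h'
      · exact hgP1 (hAP1 h')
      · exact hgP2 (hB'P2 h')
    · exact Finset.notMem_erase g P3 h'
  have hgZ1 : g ∉ A1 ∪ B' ∪ {p} := by
    intro h'
    rcases Finset.mem_union.mp h' with h' | h'
    · rcases Finset.mem_union.mp h' with h' | h'
      · exact hgP1 (hA1P1 h')
      · exact hgP2 (hB'P2 h')
    · rw [Finset.mem_singleton] at h'; exact hpg h'.symm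
  have hgZ2 : g ∉ A ∪ P2 ∪ E' := by
    intro h'
    rcases Finset.mem_union.mp h' with h' | h'
    · rcases Finset.mem_union.mp h' with h' | h'
      · exact hgP1 (hAP1 h')
      · exact hgP2 h'
    · exact Finset.notMem_erase g P3 (Finset.mem_of_mem_erase h')
  have hX1C : X1 ⊆ C.players := by
    have := hsubC (A1 ∪ P2) ∅ hX1G hgX1 (Finset.empty_subset _)
    rwa [Finset.union_empty] at this
  have hX2C : X2 ⊆ C.players := hsubC _ _ hT2G hgT2 hUH
  have hY1C : Y1 ⊆ C.players := hsubC _ _ hZ1G hgZ1 (by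
    intro x hx; rw [Finset.mem_singleton] at hx; subst hx; exact hUH hu)
  have hY2C : Y2 ⊆ C.players := hsubC _ _ hZ2G hgZ2 (hU'U.trans hUH)
  -- intersections with G.players / H.players
  have iX1 := interG (A1 ∪ P2) ∅ hX1G (Finset.empty_subset _)
  rw [Finset.union_empty] at iX1
  have iX2 := interG (A ∪ B' ∪ E) U hT2G hUH
  have iY1 := interG (A1 ∪ B' ∪ {p}) {u} hZ1G (by
    intro x hx; rw [Finset.mem_singleton] at hx; subst hx; exact hUH hu)
  have iY2 := interG (A ∪ P2 ∪ E') U' hZ2G (hU'U.trans hUH)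
  -- card computations
  have cX1 : (A1 ∪ P2).card = k2 := by
    rw [Finset.card_union_of_disjoint dA1P2, hA1card, hP2]; omega
  have cAB' : (A ∪ B').card = k1 + n2 - 1 := by
    rw [Finset.card_union_of_disjoint dAB', hAcard, hB'card]; omega
  have cA1B' : (A1 ∪ B').card = k2 - 1 := by
    rw [Finset.card_union_of_disjoint dA1B', hA1card, hB'card]; omega
  have cAP2 : (A ∪ P2).card = k1 + n2 := by
    rw [Finset.card_union_of_disjoint dAP2, hAcard, hP2]
  have cT2 : (A ∪ B' ∪ E).card = k1 + n2 + n3 - 2 := by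
    rw [Finset.card_union_of_disjoint dAB'E, cAB', hEcard]; omega
  have cZ1 : (A1 ∪ B' ∪ {p}).card = k2 := by
    rw [Finset.card_union_of_disjoint (Finset.disjoint_singleton_right.mpr dpA1B'),
      cA1B', Finset.card_singleton]
    omega
  have cZ2 : (A ∪ P2 ∪ E').card = k1 + n2 + n3 - 2 := by
    rw [Finset.card_union_of_disjoint dAP2E', cAP2, hE'card]; omega
  -- intersections with P1 ∪ P2 and P1
  have iQ : ∀ S1 S3 : Finset α, S1 ⊆ P1 ∪ P2 → S3 ⊆ P3 →
      (S1 ∪ S3) ∩ (P1 ∪ P2) = S1 := by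
    intro S1 S3 h1 h3
    ext x
    simp only [Finset.mem_inter, Finset.mem_union]
    constructor
    · rintro ⟨hx | hx, hxQ⟩
      · exact hx
      · exfalso
        rcases hxQ with hxQ | hxQ
        · exact Finset.disjoint_left.mp h13 hxQ (h3 hx)
        · exact Finset.disjoint_left.mp h23 hxQ (h3 hx)
    · intro hx
      refine ⟨Or.inl hx, ?_⟩
      rcases Finset.mem_union.mp (h1 hx) with h' | h'
      · exact Or.inl h'
      · exact Or.inr h'
  have hAB'Q : A ∪ B' ⊆ P1 ∪ P2 := Finset.union_subset
    (hAP1.trans Finset.subset_union_left) (hB'P2.trans Finset.subset_union_right)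
  have hA1B'Q : A1 ∪ B' ⊆ P1 ∪ P2 := Finset.union_subset
    (hA1P1.trans Finset.subset_union_left) (hB'P2.trans Finset.subset_union_right)
  have hAP2Q : A ∪ P2 ⊆ P1 ∪ P2 := Finset.union_subset
    (hAP1.trans Finset.subset_union_left) Finset.subset_union_right
  -- X1 is winning in G
  have winX1G : G.winning (A1 ∪ P2) := by
    rw [hwin _ hX1G]
    left
    have : (A1 ∪ P2) ∩ (P1 ∪ P2) = A1 ∪ P2 :=
      Finset.inter_eq_left.mpr (Finset.union_subset
        (hA1P1.trans Finset.subset_union_left) Finset.subset_union_right)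
    rw [this, cX1]
  -- insert g (A ∪ B' ∪ E) is winning in G
  have winT2g : G.winning (insert g (A ∪ B' ∪ E)) := by
    have hsub : insert g (A ∪ B' ∪ E) ⊆ G.players :=
      Finset.insert_subset (hP3G hg) hT2G
    rw [hwin _ hsub]
    right
    have e1 : insert g (A ∪ B' ∪ E) = (A ∪ B') ∪ (insert g E) := by
      rw [Finset.union_insert, Finset.union_assoc]
    have hEg : insert g E ⊆ P3 := Finset.insert_subset hg hEP3
    constructor
    · -- P1 part
      have e2 : ((A ∪ B') ∪ insert g E) ∩ P1 = A := by
        ext x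
        simp only [Finset.mem_inter, Finset.mem_union, Finset.mem_insert]
        constructor
        · rintro ⟨hx, hxP1⟩
          rcases hx with (hx | hx) | hx
          · exact hx
          · exact absurd hxP1 (Finset.disjoint_right.mp h12 (hB'P2 hx))
          · exfalso
            rcases hx with hx | hx
            · subst hx; exact hgP1 hxP1
            · exact Finset.disjoint_left.mp h13 hxP1 (hEP3 hx)
        · intro hx; exact ⟨Or.inl (Or.inl hx), hAP1 hx⟩
      rw [e1, e2, hAcard]
    · -- total card
      have hgE : g ∉ A ∪ B' ∪ E := hgT2
      rw [Finset.card_insert_of_notMem hgE, cT2]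
      omega
  -- Z1 is losing in G
  have loseZ1 : ¬ G.winning (A1 ∪ B' ∪ {p}) := by
    rw [hwin _ hZ1G]
    push_neg
    constructor
    · have e : (A1 ∪ B' ∪ {p}) ∩ (P1 ∪ P2) = A1 ∪ B' := by
        refine iQ (A1 ∪ B') {p} hA1B'Q ?_
        intro x hx; rw [Finset.mem_singleton] at hx; subst hx; exact hpP3
      rw [e, cA1B']; omega
    · intro _
      rw [cZ1]; omega
  -- Z2 is losing in G
  have loseZ2 : ¬ G.winning (A ∪ P2 ∪ E') := by
    rw [hwin _ hZ2G]
    push_neg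
    constructor
    · have e : (A ∪ P2 ∪ E') ∩ (P1 ∪ P2) = A ∪ P2 := iQ (A ∪ P2) E' hAP2Q hE'P3
      rw [e, cAP2]; omega
    · intro _
      rw [cZ2]; omega
  -- losing H-parts
  have loseu : ¬ H.winning {u} := by
    apply hUmin.2
    rw [Finset.ssubset_iff_subset_ne]
    refine ⟨Finset.singleton_subset_iff.mpr hu, ?_⟩
    intro h'
    rw [← h', Finset.card_singleton] at hUcard
    omega
  have loseU' : ¬ H.winning U' := hUmin.2 _ (Finset.erase_ssubset hu)
  -- winning/losing of the four coalitions in C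
  have winX1 : C.winning X1 := by
    rw [hC.2 X1 hX1C]
    left
    rw [iX1.1]
    exact winX1G
  have winX2 : C.winning X2 := by
    rw [hC.2 X2 hX2C]
    right
    rw [iX2.1, iX2.2]
    exact ⟨winT2g, hUmin.1⟩
  have loseY1 : ¬ C.winning Y1 := by
    rw [hC.2 Y1 hY1C]
    rintro (h' | ⟨-, h'⟩)
    · rw [iY1.1] at h'; exact loseZ1 h'
    · rw [iY1.2] at h'; exact loseu h'
  have loseY2 : ¬ C.winning Y2 := by
    rw [hC.2 Y2 hY2C]
    rintro (h' | ⟨-, h'⟩)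
    · rw [iY2.1] at h'; exact loseZ2 h'
    · rw [iY2.2] at h'; exact loseU' h'
  -- refute weightedness
  rintro ⟨w, q, hwpos, hiff⟩
  have s1 : q ≤ ∑ i ∈ X1, w i := (hiff X1 hX1C).mp winX1
  have s2 : q ≤ ∑ i ∈ X2, w i := (hiff X2 hX2C).mp winX2
  have s3 : ∑ i ∈ Y1, w i < q :=
    lt_of_not_ge (fun h' => loseY1 ((hiff Y1 hY1C).mpr h'))
  have s4 : ∑ i ∈ Y2, w i < q :=
    lt_of_not_ge (fun h' => loseY2 ((hiff Y2 hY2C).mpr h'))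
  -- the trading identity on weights
  have duX2 : Disjoint (A ∪ B' ∪ E) U := hdisj.mono hT2G hUH
  have duY1 : Disjoint (A1 ∪ B' ∪ {p}) ({u} : Finset α) := by
    rw [Finset.disjoint_singleton_right]
    intro h'
    exact Finset.disjoint_left.mp hdisj (hZ1G h') (hUH hu)
  have duY2 : Disjoint (A ∪ P2 ∪ E') U' := hdisj.mono hZ2G (hU'U.trans hUH)
  have dA1B'p : Disjoint (A1 ∪ B') ({p} : Finset α) :=
    Finset.disjoint_singleton_right.mpr dpA1B'
  have eX1 : ∑ i ∈ X1, w i = ∑ i ∈ A1, w i + ∑ i ∈ P2, w i :=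
    Finset.sum_union dA1P2
  have eX2 : ∑ i ∈ X2, w i
      = ∑ i ∈ A, w i + ∑ i ∈ B', w i + ∑ i ∈ E, w i + ∑ i ∈ U, w i := by
    rw [hX2def, Finset.sum_union duX2, Finset.sum_union dAB'E, Finset.sum_union dAB']
  have eY1 : ∑ i ∈ Y1, w i = ∑ i ∈ A1, w i + ∑ i ∈ B', w i + w p + w u := by
    rw [hY1def, Finset.sum_union duY1, Finset.sum_union dA1B'p, Finset.sum_union dA1B',
      Finset.sum_singleton, Finset.sum_singleton]
  have eY2 : ∑ i ∈ Y2, w i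
      = ∑ i ∈ A, w i + ∑ i ∈ P2, w i + ∑ i ∈ E', w i + ∑ i ∈ U', w i := by
    rw [hY2def, Finset.sum_union duY2, Finset.sum_union dAP2E', Finset.sum_union dAP2]
  have eP2 : w b + ∑ i ∈ B', w i = ∑ i ∈ P2, w i := Finset.add_sum_erase P2 w hb
  have eE : w p + ∑ i ∈ E', w i = ∑ i ∈ E, w i := Finset.add_sum_erase E w hp
  have eU : w u + ∑ i ∈ U', w i = ∑ i ∈ U, w i := Finset.add_sum_erase U w hu
  linarith
end
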